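/- arXiv:0908.0050 — 9 statements merged into one kernel-verified Lean document; each statement's English description precedes it below -/
import Mathlib

section
/- Fix u ∈ ℝ^m, A ∈ ℝ^{k×k} with A[j,j] > 0, B ∈ ℝ^{m×k}, and D ∈ ℝ^{m×k}. The minimizer over d ∈ ℝ^m with ‖d‖₂ ≤ 1 of the function d ↦ (1/2)A[j,j]‖d‖₂² − (b_j − ∑_{i≠j} A[i,j] d_i)ᵀ d (the restriction of (1/2)Tr(DᵀDA) − Tr(DᵀB) to the j-th column) is given by d_j = u_j / max(‖u_j‖₂, 1), where u_j = (1/A[j,j])(b_j − D a_j) + d_j^{old}, with a_j, b_j the j-th columns of A, B. -/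
/-!
Writing `c = A[j,j]`, the linear coefficient of the objective is `c • u_j`, so the objective is
`(c/2) (‖d - u_j‖² - ‖u_j‖²)`: minimizing it over the unit ball means finding the point of the
ball nearest to `u_j`. That point is the radial retraction `u_j / max(‖u_j‖, 1)`: when
`‖u_j‖ > 1` it lies at distance `‖u_j‖ - 1`, and every `d` in the ball has
`‖d - u_j‖ ≥ ‖u_j‖ - ‖d‖ ≥ ‖u_j‖ - 1`.
-/

open Finset RealInnerProductSpace

section RadialRetraction

variable {E : Type*} [NormedAddCommGroup E] [NormedSpace ℝ E]

theorem norm_inv_max_norm_one_smul_le_one (u : E) : ‖(max ‖u‖ 1)⁻¹ • u‖ ≤ 1 := by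
  have hr : 0 < max ‖u‖ 1 := lt_max_of_lt_right one_pos
  rw [norm_smul, Real.norm_of_nonneg (inv_nonneg.2 hr.le), inv_mul_le_iff₀ hr, mul_one]
  exact le_max_left _ _

theorem norm_inv_max_norm_one_smul_sub_le {u d : E} (hd : ‖d‖ ≤ 1) :
    ‖(max ‖u‖ 1)⁻¹ • u - u‖ ≤ ‖d - u‖ := by
  rcases le_total ‖u‖ 1 with hu | hu
  · simp [max_eq_right hu]
  · have hu_pos : 0 < ‖u‖ := one_pos.trans_le hu
    calc ‖(max ‖u‖ 1)⁻¹ • u - u‖ = ‖u‖ - 1 := by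
          rw [max_eq_left hu, ← one_smul ℝ u, smul_smul, ← sub_smul, norm_smul, one_smul,
            Real.norm_of_nonpos (by simpa using inv_le_one_of_one_le₀ hu)]
          field_simp
          ring
      _ ≤ ‖u‖ - ‖d‖ := by linarith
      _ ≤ ‖d - u‖ := norm_sub_rev d u ▸ norm_sub_norm_le u d

end RadialRetraction

section Quadratic

variable {E : Type*} [NormedAddCommGroup E] [InnerProductSpace ℝ E]

theorem half_mul_norm_sq_sub_mul_inner (c : ℝ) (u x : E) :
    c / 2 * ‖x‖ ^ 2 - c * ⟪u, x⟫ = c / 2 * (‖x - u‖ ^ 2 - ‖u‖ ^ 2) := by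
  rw [norm_sub_sq_real, real_inner_comm]
  ring

theorem half_mul_norm_sq_sub_mul_inner_le {c : ℝ} (hc : 0 ≤ c) (u : E) {d : E} (hd : ‖d‖ ≤ 1) :
    c / 2 * ‖(max ‖u‖ 1)⁻¹ • u‖ ^ 2 - c * ⟪u, (max ‖u‖ 1)⁻¹ • u⟫ ≤
      c / 2 * ‖d‖ ^ 2 - c * ⟪u, d⟫ := by
  rw [half_mul_norm_sq_sub_mul_inner, half_mul_norm_sq_sub_mul_inner]
  gcongr
  exact norm_inv_max_norm_one_smul_sub_le hd

end Quadratic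

theorem sub_sum_erase_mul_eq_diag_mul {m k : ℕ} (A : Matrix (Fin k) (Fin k) ℝ)
    (B D : Matrix (Fin m) (Fin k) ℝ) {j : Fin k} (hAjj : A j j ≠ 0) (i : Fin m) :
    B i j - ∑ l ∈ univ.erase j, A l j * D i l =
      A j j * ((1 / A j j) * (B i j - ∑ l, D i l * A l j) + D i j) := by
  rw [← add_sum_erase _ _ (mem_univ j)]
  simp only [mul_comm (D i _)]
  field_simp
  ring

/-- The block-coordinate dictionary update: the minimizer over the unit `ℓ²`-ball of
`d ↦ (1/2) A[j,j] ‖d‖₂² − (b_j − ∑_{i≠j} A[i,j] d_i)ᵀ d` is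
`u_j / max(‖u_j‖₂, 1)`, where `u_j = (1/A[j,j]) (b_j − D a_j) + d_j`. -/
theorem dictionary_column_update (m k : ℕ)
    (A : Matrix (Fin k) (Fin k) ℝ) (B : Matrix (Fin m) (Fin k) ℝ)
    (D : Matrix (Fin m) (Fin k) ℝ) (j : Fin k) (hAjj : 0 < A j j)
    (u dnew : Fin m → ℝ)
    (hu : u = fun i => (1 / A j j) * (B i j - ∑ l, D i l * A l j) + D i j)
    (hdnew : dnew = fun i => u i / max (Real.sqrt (∑ i', (u i')^2)) 1)
    (F : (Fin m → ℝ) → ℝ)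
    (hF : F = fun d => (1/2) * A j j * (∑ i, (d i)^2) -
        ∑ i, (B i j - ∑ l ∈ Finset.univ.erase j, A l j * D i l) * d i) :
    (∑ i, (dnew i)^2 ≤ 1) ∧ ∀ d : Fin m → ℝ, (∑ i, (d i)^2 ≤ 1) → F dnew ≤ F d := by
  set x : EuclideanSpace ℝ (Fin m) := WithLp.toLp 2 u
  have sum_sq (v : Fin m → ℝ) : ∑ i, (v i) ^ 2 = ‖WithLp.toLp 2 v‖ ^ 2 :=
    (EuclideanSpace.real_norm_sq_eq _).symm
  have hdnew_eq : WithLp.toLp 2 dnew = (max ‖x‖ 1)⁻¹ • x := by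
    ext i
    simp [hdnew, x, EuclideanSpace.norm_eq, div_eq_inv_mul]
  have hF_eq (v : Fin m → ℝ) :
      F v = A j j / 2 * ‖WithLp.toLp 2 v‖ ^ 2 - A j j * ⟪x, WithLp.toLp 2 v⟫ := by
    have hcoef (i : Fin m) : B i j - ∑ l ∈ univ.erase j, A l j * D i l = A j j * u i := by
      rw [hu]
      exact sub_sum_erase_mul_eq_diag_mul A B D hAjj.ne' i
    simp only [hF, hcoef, ← sum_sq, x, PiLp.inner_apply, Real.inner_apply, mul_sum]
    ring_nf
  refine ⟨?_, fun d hd => ?_⟩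
  · rw [sum_sq, hdnew_eq]
    exact pow_le_one₀ (norm_nonneg _) (norm_inv_max_norm_one_smul_le_one x)
  · rw [sum_sq, sq_le_one_iff₀ (norm_nonneg _)] at hd
    rw [hF_eq, hF_eq, hdnew_eq]
    exact half_mul_norm_sq_sub_mul_inner_le hAjj.le x hd
end

section
/- Consider minimizing g(D) = (1/2)Tr(DᵀDA) − Tr(DᵀB) over the set C = {D ∈ ℝ^{m×k} : ‖d_j‖₂ ≤ 1 for each column j}, with A symmetric positive definite. Block-coordinate descent cycling over the columns of D (each step projecting u_j = (1/A[j,j])(b_j − Da_j) + d_j onto the unit ℓ²-ball) converges to the global minimizer of g on C. -/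
/-!
Updating column `j` minimizes `g` exactly in that column: as a function of the column `d`, `g` is
`A j j / 2 * ‖d - u_j‖²` up to a constant, and `v ↦ v / max ‖v‖ 1` is the metric projection onto
the unit ball. So a cycle strictly decreases `g` unless it fixes `D`. At a fixed point each column
satisfies the variational inequality of its projection, i.e. the linear term of
`g (D + E) = g D + tr (Eᵀ (D A - B)) + tr (Eᵀ E A) / 2` is nonnegative for `D + E ∈ C`; as `A ≻ 0`
the quadratic term is positive, so a fixed point is the unique minimizer. The iterates stay in the
compact set `C` and `g` decreases along them, so every cluster point `L` satisfies
`g (T L) = g L` for the continuous cycle map `T`, hence is the minimizer.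
-/

open Finset Matrix

/-- One block-coordinate update of column `j` of the dictionary:
replace column `j` with the projection of `u_j = (1/A[j,j])(b_j − D a_j) + d_j`
onto the unit `ℓ²`-ball. -/
noncomputable def updCol {m k : ℕ} (A : Matrix (Fin k) (Fin k) ℝ)
    (B : Matrix (Fin m) (Fin k) ℝ) (D : Matrix (Fin m) (Fin k) ℝ) (j : Fin k) :
    Matrix (Fin m) (Fin k) ℝ :=
  let u : Fin m → ℝ := fun i => (1 / A j j) * (B i j - ∑ l, D i l * A l j) + D i j
  fun i l => if l = j then u i / max (Real.sqrt (∑ i', (u i')^2)) 1 else D i l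

/-- One full cycle of block-coordinate descent over the columns of `D`. -/
noncomputable def bcdCycle {m k : ℕ} (A : Matrix (Fin k) (Fin k) ℝ)
    (B : Matrix (Fin m) (Fin k) ℝ) (D : Matrix (Fin m) (Fin k) ℝ) :
    Matrix (Fin m) (Fin k) ℝ :=
  (List.finRange k).foldl (updCol A B) D

open Filter Topology Set

theorem tendsto_orbit_of_strict_descent {X : Type*} [TopologicalSpace X] {K : Set X}
    (hK : IsCompact K) {f : X → ℝ} (hf : Continuous f) {T : X → X} (hT : Continuous T)
    (hTK : MapsTo T K K) (hdesc : ∀ x ∈ K, f (T x) ≤ f x) {x₀ : X}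
    (hstat : ∀ x ∈ K, f (T x) = f x → x = x₀) {u : ℕ → X} (hu0 : u 0 ∈ K)
    (hu : ∀ n, u (n + 1) = T (u n)) : Tendsto u atTop (𝓝 x₀) := by
  have hmem : ∀ n, u n ∈ K := fun n => by
    induction n with
    | zero => exact hu0
    | succ n ih => exact hu n ▸ hTK ih
  have hlim : Tendsto (f ∘ u) atTop (𝓝 (⨅ n, f (u n))) := by
    refine tendsto_atTop_ciInf (antitone_nat_of_succ_le fun n => ?_) ?_
    · simpa only [Function.comp, hu n] using hdesc _ (hmem n)
    · obtain ⟨b, hb⟩ := hK.bddBelow_image hf.continuousOn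
      exact ⟨b, by rintro _ ⟨n, rfl⟩; exact hb ⟨u n, hmem n, rfl⟩⟩
  have hlevel : ∀ y, MapClusterPt y atTop u → f y = ⨅ n, f (u n) := fun y hy =>
    eq_of_nhds_neBot ((hy.continuousAt_comp hf.continuousAt).clusterPt.mono hlim)
  refine hK.tendsto_nhds_of_unique_mapClusterPt (Eventually.of_forall hmem) fun x hx hcl => ?_
  have hTx : MapClusterPt (T x) atTop u := by
    refine MapClusterPt.of_comp (tendsto_add_atTop_nat 1) ?_
    rw [show u ∘ (· + 1) = T ∘ u from funext hu]
    exact hcl.continuousAt_comp hT.continuousAt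
  exact hstat x hx ((hlevel _ hTx).trans (hlevel x hcl).symm)

theorem continuous_foldl {X β : Type*} [TopologicalSpace X] {f : X → β → X}
    (hf : ∀ b, Continuous fun x => f x b) : ∀ l : List β, Continuous fun x => l.foldl f x
  | [] => continuous_id
  | b :: l => (continuous_foldl hf l).comp (hf b)

section FoldlDescent

variable {α β : Type*} {f : α → β → α} {s : Set α} {φ : α → ℝ}

theorem foldl_mem (hs : ∀ a ∈ s, ∀ b, f a b ∈ s) :
    ∀ (l : List β) {a : α}, a ∈ s → l.foldl f a ∈ s
  | [], _, ha => ha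
  | b :: l, _, ha => foldl_mem hs l (hs _ ha b)

theorem foldl_le (hs : ∀ a ∈ s, ∀ b, f a b ∈ s)
    (hφ : ∀ a ∈ s, ∀ b, f a b ≠ a → φ (f a b) < φ a) :
    ∀ (l : List β) {a : α}, a ∈ s → φ (l.foldl f a) ≤ φ a
  | [], _, _ => le_rfl
  | b :: l, a, ha => by
    refine (foldl_le hs hφ l (hs a ha b)).trans ?_
    by_cases hb : f a b = a
    · rw [hb]
    · exact (hφ a ha b hb).le

theorem forall_eq_of_foldl_eq (hs : ∀ a ∈ s, ∀ b, f a b ∈ s)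
    (hφ : ∀ a ∈ s, ∀ b, f a b ≠ a → φ (f a b) < φ a) : ∀ (l : List β) {a : α}, a ∈ s →
    φ (l.foldl f a) = φ a → ∀ b ∈ l, f a b = a
  | [], _, _, _ => by simp
  | b :: l, a, ha, heq => by
    rw [List.foldl_cons] at heq
    have hb : f a b = a := by
      by_contra hb
      exact (hφ a ha b hb).not_ge (heq ▸ foldl_le hs hφ l (hs a ha b))
    rw [hb] at heq
    intro c hc
    rcases List.mem_cons.1 hc with rfl | hc
    · exact hb
    · exact forall_eq_of_foldl_eq hs hφ l ha heq c hc

end FoldlDescent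

section BallRetract

variable {F : Type*} [NormedAddCommGroup F] [InnerProductSpace ℝ F]

noncomputable def ballRetract (v : F) : F := (max ‖v‖ 1)⁻¹ • v

theorem continuous_ballRetract : Continuous (ballRetract : F → F) :=
  ((continuous_norm.max continuous_const).inv₀ fun _ =>
    (one_pos.trans_le (le_max_right _ _)).ne').smul continuous_id

theorem norm_ballRetract_le_one (v : F) : ‖ballRetract v‖ ≤ 1 := by
  rw [ballRetract, norm_smul, norm_inv, Real.norm_of_nonneg (by positivity)]
  exact inv_mul_le_one_of_le₀ (le_max_left _ _) (by positivity)

theorem inner_ballRetract_sub_nonneg (v : F) {e : F} (he : ‖e‖ ≤ 1) :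
    0 ≤ inner ℝ (ballRetract v - v) (e - ballRetract v) := by
  rcases le_or_gt ‖v‖ 1 with hv | hv
  · simp [ballRetract, max_eq_right hv]
  have hM : max ‖v‖ 1 = ‖v‖ := max_eq_left hv.le
  have hv0 : 0 < ‖v‖ := one_pos.trans hv
  have hcs : inner ℝ v e ≤ ‖v‖ :=
    (real_inner_le_norm v e).trans (mul_le_of_le_one_right hv0.le he)
  have key : inner ℝ (ballRetract v - v) (e - ballRetract v)
      = (1 - ‖v‖⁻¹) * (‖v‖ - inner ℝ v e) := by
    simp only [ballRetract, hM, inner_sub_left, inner_sub_right, inner_smul_left,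
      inner_smul_right, real_inner_self_eq_norm_sq, RCLike.conj_to_real]
    field_simp
    ring
  rw [key]
  exact mul_nonneg (sub_nonneg.2 (inv_le_one_of_one_le₀ hv.le)) (sub_nonneg.2 hcs)

theorem norm_ballRetract_sub_sq_add_le (v : F) {e : F} (he : ‖e‖ ≤ 1) :
    ‖ballRetract v - v‖ ^ 2 + ‖e - ballRetract v‖ ^ 2 ≤ ‖e - v‖ ^ 2 := by
  have h := inner_ballRetract_sub_nonneg v he
  rw [show e - v = (e - ballRetract v) + (ballRetract v - v) by abel, norm_add_sq_real,
    real_inner_comm]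
  linarith

end BallRetract

section Columns

variable {ι κ : Type*}

def colVec (M : Matrix ι κ ℝ) (j : κ) : EuclideanSpace ℝ ι := WithLp.toLp 2 (Mᵀ j)

theorem colVec_sub (M N : Matrix ι κ ℝ) (j : κ) :
    colVec (M - N) j = colVec M j - colVec N j := rfl

section UpdateCol

variable [DecidableEq κ]

theorem colVec_updateCol_self (D : Matrix ι κ ℝ) (j : κ) (d : EuclideanSpace ℝ ι) :
    colVec (D.updateCol j d.ofLp) j = d := by
  ext i
  simp [colVec]

theorem colVec_updateCol_of_ne (D : Matrix ι κ ℝ) {j l : κ} (h : l ≠ j)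
    (d : EuclideanSpace ℝ ι) : colVec (D.updateCol j d.ofLp) l = colVec D l := by
  ext i
  simp [colVec, h]

theorem updateCol_eq_add (D : Matrix ι κ ℝ) (j : κ) (d : EuclideanSpace ℝ ι) :
    D.updateCol j d.ofLp = D + updateCol 0 j (d - colVec D j).ofLp := by
  ext i l
  by_cases h : l = j
  · subst h
    simp [colVec]
  · simp [h]

end UpdateCol

section Gradient

variable [Fintype κ]

/-- `u_j` of the paper: the minimizer of the objective over column `j` without constraint. -/
noncomputable def blockTarget (A : Matrix κ κ ℝ) (B D : Matrix ι κ ℝ) (j : κ) :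
    EuclideanSpace ℝ ι :=
  colVec D j - (A j j)⁻¹ • colVec (D * A - B) j

theorem colVec_gradient {A : Matrix κ κ ℝ} {j : κ} (hAj : A j j ≠ 0) (B D : Matrix ι κ ℝ) :
    colVec (D * A - B) j = A j j • (colVec D j - blockTarget A B D j) := by
  rw [blockTarget, sub_sub_cancel, smul_smul, mul_inv_cancel₀ hAj, one_smul]

end Gradient

variable [Fintype ι]

def colUnitBall : Set (Matrix ι κ ℝ) := {D | ∀ j, ∑ i, (D i j) ^ 2 ≤ 1}

theorem mem_colUnitBall_iff {D : Matrix ι κ ℝ} :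
    D ∈ colUnitBall ↔ ∀ j, ‖colVec D j‖ ≤ 1 := by
  refine forall_congr' fun j => ?_
  rw [← sq_le_one_iff₀ (norm_nonneg _), EuclideanSpace.real_norm_sq_eq]
  rfl

theorem isCompact_colUnitBall : IsCompact (colUnitBall : Set (Matrix ι κ ℝ)) := by
  have hcols : colUnitBall = (fun v : κ → EuclideanSpace ℝ ι => Matrix.of fun i j => v j i) ''
      Set.univ.pi fun _ => Metric.closedBall 0 1 := by
    ext D
    simp only [mem_colUnitBall_iff, Set.mem_image, Set.mem_univ_pi, mem_closedBall_zero_iff]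
    exact ⟨fun hD => ⟨colVec D, hD, rfl⟩, by rintro ⟨v, hv, rfl⟩; exact hv⟩
  rw [hcols]
  exact (isCompact_univ_pi fun _ => isCompact_closedBall 0 1).image <|
    continuous_pi fun i => continuous_pi fun j =>
      (PiLp.continuous_apply 2 _ i).comp (continuous_apply j)

variable [Fintype κ]

noncomputable def objective (A : Matrix κ κ ℝ) (B D : Matrix ι κ ℝ) : ℝ :=
  1 / 2 * trace (Dᵀ * D * A) - trace (Dᵀ * B)

theorem continuous_objective (A : Matrix κ κ ℝ) (B : Matrix ι κ ℝ) :
    Continuous (objective A B) := by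
  unfold objective
  fun_prop

theorem objective_add {A : Matrix κ κ ℝ} (hA : Aᵀ = A) (B D E : Matrix ι κ ℝ) :
    objective A B (D + E) =
      objective A B D + trace (Eᵀ * (D * A - B)) + 1 / 2 * trace (Eᵀ * E * A) := by
  have hcross : trace (Dᵀ * (E * A)) = trace (Eᵀ * (D * A)) := by
    rw [← trace_transpose, transpose_mul, transpose_mul, transpose_transpose, hA,
      trace_mul_comm, ← Matrix.mul_assoc, trace_mul_comm]
  simp only [objective, transpose_add, Matrix.add_mul, Matrix.mul_add, Matrix.mul_sub,
    trace_add, trace_sub, Matrix.mul_assoc, hcross]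
  ring

theorem trace_transpose_mul_eq_sum_inner (M N : Matrix ι κ ℝ) :
    trace (Mᵀ * N) = ∑ j, inner ℝ (colVec M j) (colVec N j) := by
  simp [trace, mul_apply, colVec, PiLp.inner_apply, mul_comm]

theorem trace_transpose_mul_self_mul (A : Matrix κ κ ℝ) (E : Matrix ι κ ℝ) :
    trace (Eᵀ * E * A) = ∑ i, E i ⬝ᵥ (A *ᵥ E i) := by
  rw [trace_mul_cycle, trace_mul_cycle]
  simp only [trace, Matrix.diag, mul_apply, transpose_apply, dotProduct, mulVec, Finset.sum_mul]
  refine Finset.sum_congr rfl fun i _ => ?_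
  rw [Finset.sum_comm]
  simp only [Finset.mul_sum, mul_assoc]

theorem trace_transpose_mul_self_mul_pos {A : Matrix κ κ ℝ} (hA : A.PosDef)
    {E : Matrix ι κ ℝ} (hE : E ≠ 0) : 0 < trace (Eᵀ * E * A) := by
  obtain ⟨i, hi⟩ : ∃ i, E i ≠ 0 := by
    by_contra! h
    exact hE (funext h)
  rw [trace_transpose_mul_self_mul]
  refine Finset.sum_pos' (fun i _ => ?_) ⟨i, Finset.mem_univ _, ?_⟩
  · simpa using hA.posSemidef.dotProduct_mulVec_nonneg (E i)
  · simpa using hA.dotProduct_mulVec_pos hi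

variable [DecidableEq κ]

theorem trace_transpose_updateCol_zero_mul (j : κ) (e : EuclideanSpace ℝ ι)
    (M : Matrix ι κ ℝ) : trace ((updateCol 0 j e.ofLp)ᵀ * M) = inner ℝ e (colVec M j) := by
  simp [trace, mul_apply, updateCol_apply, colVec, PiLp.inner_apply, mul_comm]

theorem trace_transpose_updateCol_zero_mul_self_mul (j : κ) (e : EuclideanSpace ℝ ι)
    (A : Matrix κ κ ℝ) :
    trace ((updateCol 0 j e.ofLp)ᵀ * updateCol 0 j e.ofLp * A) = ‖e‖ ^ 2 * A j j := by
  rw [EuclideanSpace.real_norm_sq_eq]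
  simp [trace, mul_apply, updateCol_apply, sq, Finset.sum_mul]

theorem objective_updateCol {A : Matrix κ κ ℝ} (hA : Aᵀ = A) (B D : Matrix ι κ ℝ) (j : κ)
    (d : EuclideanSpace ℝ ι) :
    objective A B (D.updateCol j d.ofLp) = objective A B D
      + inner ℝ (d - colVec D j) (colVec (D * A - B) j) + A j j / 2 * ‖d - colVec D j‖ ^ 2 := by
  rw [updateCol_eq_add, objective_add hA, trace_transpose_updateCol_zero_mul,
    trace_transpose_updateCol_zero_mul_self_mul]
  ring

theorem objective_updateCol_eq {A : Matrix κ κ ℝ} (hA : Aᵀ = A) {j : κ} (hAj : A j j ≠ 0)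
    (B D : Matrix ι κ ℝ) (d : EuclideanSpace ℝ ι) :
    objective A B (D.updateCol j d.ofLp) = objective A B D
      + A j j / 2 * (‖d - blockTarget A B D j‖ ^ 2 - ‖colVec D j - blockTarget A B D j‖ ^ 2) := by
  rw [objective_updateCol hA, colVec_gradient hAj, inner_smul_right,
    show d - blockTarget A B D j = (d - colVec D j) + (colVec D j - blockTarget A B D j) by abel,
    norm_add_sq_real]
  ring

end Columns

section BlockCoordinateDescent

variable {m k : ℕ} {A : Matrix (Fin k) (Fin k) ℝ} {B D : Matrix (Fin m) (Fin k) ℝ}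

theorem updCol_eq_updateCol (A : Matrix (Fin k) (Fin k) ℝ) (B D : Matrix (Fin m) (Fin k) ℝ)
    (j : Fin k) : updCol A B D j = D.updateCol j (ballRetract (blockTarget A B D j)).ofLp := by
  have hu : blockTarget A B D j =
      WithLp.toLp 2 fun i => 1 / A j j * (B i j - ∑ l, D i l * A l j) + D i j := by
    ext i
    simp only [blockTarget, colVec, PiLp.sub_apply, PiLp.smul_apply, transpose_apply,
      Matrix.sub_apply, mul_apply, smul_eq_mul]
    ring
  ext i l
  by_cases h : l = j
  · subst h
    simp [updCol, ballRetract, hu, EuclideanSpace.norm_eq, div_eq_inv_mul]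
  · simp [updCol, h]

theorem continuous_bcdCycle (A : Matrix (Fin k) (Fin k) ℝ) (B : Matrix (Fin m) (Fin k) ℝ) :
    Continuous (bcdCycle A B) := by
  refine continuous_foldl (fun j => ?_) _
  simp only [updCol_eq_updateCol]
  refine continuous_id.matrix_updateCol j <|
    (PiLp.continuous_ofLp 2 _).comp (continuous_ballRetract.comp ?_)
  unfold blockTarget colVec
  fun_prop

theorem updCol_mem_colUnitBall (hD : D ∈ colUnitBall) (j : Fin k) :
    updCol A B D j ∈ colUnitBall := by
  rw [mem_colUnitBall_iff] at hD ⊢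
  intro l
  rw [updCol_eq_updateCol]
  by_cases h : l = j
  · rw [h, colVec_updateCol_self]
    exact norm_ballRetract_le_one _
  · rw [colVec_updateCol_of_ne _ h]
    exact hD l

theorem updCol_eq_self_iff {j : Fin k} :
    updCol A B D j = D ↔ colVec D j = ballRetract (blockTarget A B D j) := by
  rw [updCol_eq_updateCol]
  constructor
  · intro h
    rw [← colVec_updateCol_self D j (ballRetract _), h]
  · intro h
    rw [← h]
    exact updateCol_eq_self D j

theorem objective_updCol_lt (hA : A.PosDef) (hD : D ∈ colUnitBall) {j : Fin k}
    (hne : updCol A B D j ≠ D) : objective A B (updCol A B D j) < objective A B D := by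
  set u := blockTarget A B D j
  have hAj : 0 < A j j := hA.diag_pos
  have hproj := norm_ballRetract_sub_sq_add_le u (mem_colUnitBall_iff.1 hD j)
  have hmove : 0 < ‖colVec D j - ballRetract u‖ ^ 2 :=
    pow_pos (norm_pos_iff.2 (sub_ne_zero.2 (mt updCol_eq_self_iff.2 hne))) 2
  have hdrop : ‖ballRetract u - u‖ ^ 2 - ‖colVec D j - u‖ ^ 2 < 0 := by linarith
  rw [updCol_eq_updateCol, objective_updateCol_eq (isHermitian_iff_isSymm.1 hA.1).eq hAj.ne']
  linarith [mul_neg_of_pos_of_neg (half_pos hAj) hdrop]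

theorem objective_lt_of_forall_updCol_eq_self (hA : A.PosDef)
    (hfix : ∀ j, updCol A B D j = D) {E : Matrix (Fin m) (Fin k) ℝ} (hE : E ∈ colUnitBall)
    (hne : E ≠ D) : objective A B D < objective A B E := by
  have hgrad : 0 ≤ trace ((E - D)ᵀ * (D * A - B)) := by
    rw [trace_transpose_mul_eq_sum_inner]
    refine Finset.sum_nonneg fun j _ => ?_
    rw [colVec_gradient hA.diag_pos.ne', colVec_sub, updCol_eq_self_iff.1 (hfix j),
      inner_smul_right, real_inner_comm]
    exact mul_nonneg hA.diag_pos.le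
      (inner_ballRetract_sub_nonneg _ (mem_colUnitBall_iff.1 hE j))
  have hcurv := trace_transpose_mul_self_mul_pos hA (sub_ne_zero.2 hne)
  calc objective A B D
      < objective A B D + trace ((E - D)ᵀ * (D * A - B))
          + 1 / 2 * trace ((E - D)ᵀ * (E - D) * A) := by linarith
    _ = objective A B E := by
        rw [← objective_add (isHermitian_iff_isSymm.1 hA.1).eq, add_sub_cancel]

end BlockCoordinateDescent

/-- Block-coordinate descent on `g(D) = (1/2)Tr(DᵀDA) − Tr(DᵀB)` over the product of
unit `ℓ²`-balls converges to the global minimizer of `g` on that set, when `A` is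
symmetric positive definite. -/
theorem bcd_converges_to_global_min (m k : ℕ)
    (A : Matrix (Fin k) (Fin k) ℝ) (hA : A.PosDef)
    (B : Matrix (Fin m) (Fin k) ℝ)
    (g : Matrix (Fin m) (Fin k) ℝ → ℝ)
    (hg : g = fun D => (1/2) * Matrix.trace (Dᵀ * D * A) - Matrix.trace (Dᵀ * B))
    (C : Set (Matrix (Fin m) (Fin k) ℝ))
    (hC : C = {D | ∀ j : Fin k, ∑ i, (D i j)^2 ≤ 1})
    (Dseq : ℕ → Matrix (Fin m) (Fin k) ℝ)
    (h0 : Dseq 0 ∈ C)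
    (hrec : ∀ n : ℕ, Dseq (n + 1) = bcdCycle A B (Dseq n)) :
    ∃ Dstar : Matrix (Fin m) (Fin k) ℝ, Dstar ∈ C ∧ (∀ D ∈ C, g Dstar ≤ g D) ∧
      Filter.Tendsto Dseq Filter.atTop (nhds Dstar) := by
  obtain rfl : g = objective A B := hg
  obtain rfl : C = colUnitBall := hC
  have hstep : ∀ D ∈ colUnitBall, ∀ j, updCol A B D j ≠ D →
      objective A B (updCol A B D j) < objective A B D := fun _ hD _ => objective_updCol_lt hA hD
  have hmaps : ∀ D ∈ colUnitBall, ∀ j, updCol A B D j ∈ colUnitBall :=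
    fun _ hD => updCol_mem_colUnitBall hD
  obtain ⟨Dstar, hDstar, hmin⟩ :=
    isCompact_colUnitBall.exists_isMinOn ⟨_, h0⟩ (continuous_objective A B).continuousOn
  refine ⟨Dstar, hDstar, fun D hD => hmin hD, ?_⟩
  refine tendsto_orbit_of_strict_descent isCompact_colUnitBall (continuous_objective A B)
    (continuous_bcdCycle A B) (fun D hD => foldl_mem hmaps _ hD)
    (fun D hD => foldl_le hmaps hstep _ hD) (fun D hD heq => ?_) h0 hrec
  by_contra hne
  refine (hmin hD).not_gt (objective_lt_of_forall_updCol_eq_self hA (fun j => ?_) hDstar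
    (Ne.symm hne))
  exact forall_eq_of_foldl_eq hmaps hstep _ hD heq j (List.mem_finRange j)
end

section
/- Let K ⊂ ℝ^m be compact and C = {D ∈ ℝ^{m×k} : each column has ℓ²-norm ≤ 1}. Suppose for each x ∈ K and D ∈ C the Lasso problem min_α (1/2)‖x − Dα‖₂² + λ‖α‖₁ has a unique solution α★(x,D). Then the function ℓ(x,D) = min_α (1/2)‖x − Dα‖₂² + λ‖α‖₁ is continuously differentiable in D with ∇_D ℓ(x,D) = −(x − Dα★(x,D)) α★(x,D)ᵀ. -/
open Finset Filter Topology
open scoped RealInnerProductSpace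

/-!
Write `F(D, α)` for the Lasso objective. Since `λ‖α‖₁ ≤ F(D, α★) ≤ F(D, 0) = ½‖x‖²`, all minimizers
lie in one compact ball, so joint continuity of `F` and uniqueness of the minimizer make
`D ↦ α★(x, D)` continuous. For fixed `α`, `F(·, α)` is a quadratic polynomial in `D` lying above its
tangent plane, whence the increment `ℓ(D') - ℓ(D) - ⟪∇_D F(D, α★(D)), D' - D⟫` is squeezed between
`⟪∇_D F(D, α★(D')) - ∇_D F(D, α★(D)), D' - D⟫` and the quadratic remainder of `F(·, α★(D))`;
continuity of `α★` makes both `o(‖D' - D‖)` (Danskin's theorem).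
-/

theorem continuousWithinAt_of_isMinimizer {X Y : Type*} [TopologicalSpace X] [TopologicalSpace Y]
    {f : X → Y → ℝ} (hf : Continuous (Function.uncurry f)) {a : X → Y} {S : Set X} {B : Set Y}
    {x : X} (hB : IsCompact B) (haB : ∀ x' ∈ S, a x' ∈ B)
    (hmin : ∀ x' ∈ S, ∀ y, f x' (a x') ≤ f x' y) (huniq : ∀ y, f x y ≤ f x (a x) → y = a x) :
    ContinuousWithinAt a S x := by
  refine hB.tendsto_nhds_of_unique_mapClusterPt (eventually_nhdsWithin_of_forall haB)
    fun y _ hy => huniq y (not_lt.1 fun hlt => ?_)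
  have hnear : ∀ᶠ p in 𝓝 x ×ˢ 𝓝 y, f p.1 (a x) < f p.1 p.2 := by
    rw [← nhds_prod_eq]
    exact (hf.comp (continuous_fst.prodMk continuous_const)).continuousAt.eventually_lt
      hf.continuousAt hlt
  obtain ⟨U, hU, V, hV, hUV⟩ := eventually_prod_iff.1 hnear
  obtain ⟨x', hx'V, hx'S, hx'U⟩ := ((mapClusterPt_iff_frequently.1 hy _ hV).and_eventually
    (eventually_mem_nhdsWithin.and (mem_nhdsWithin_of_mem_nhds hU))).exists
  exact (hUV hx'U hx'V).not_ge (hmin x' hx'S (a x))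

theorem hasGradientWithinAt_apply_minimizer {E Y : Type*} [NormedAddCommGroup E]
    [InnerProductSpace ℝ E] [CompleteSpace E] {f : E → Y → ℝ} {G : Y → E} {a : E → Y}
    {S : Set E} {x : E} (hx : x ∈ S) (hmin : ∀ x' ∈ S, ∀ y, f x' (a x') ≤ f x' y)
    (hsupp : ∀ x' y, f x y + ⟪G y, x' - x⟫ ≤ f x' y)
    (hgrad : HasGradientWithinAt (f · (a x)) (G (a x)) S x)
    (hG : ContinuousWithinAt (G ∘ a) S x) :
    HasGradientWithinAt (fun x' => f x' (a x')) (G (a x)) S x := by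
  rw [hasGradientWithinAt_iff_isLittleO, Asymptotics.isLittleO_iff] at hgrad ⊢
  intro c hc
  have hG' : ∀ᶠ x' in 𝓝[S] x, ‖G (a x') - G (a x)‖ ≤ c :=
    (tendsto_iff_norm_sub_tendsto_zero.1 hG).eventually (ge_mem_nhds hc)
  filter_upwards [hgrad hc, hG', self_mem_nhdsWithin] with x' hup hG' hx'
  have upper : f x' (a x') - f x (a x) - ⟪G (a x), x' - x⟫
      ≤ f x' (a x) - f x (a x) - ⟪G (a x), x' - x⟫ := by
    linarith [hmin x' hx' (a x)]
  have lower : ⟪G (a x') - G (a x), x' - x⟫ ≤ f x' (a x') - f x (a x) - ⟪G (a x), x' - x⟫ := by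
    rw [inner_sub_left]
    linarith [hmin x hx (a x'), hsupp x' (a x')]
  have hinner : |⟪G (a x') - G (a x), x' - x⟫| ≤ c * ‖x' - x‖ :=
    (abs_real_inner_le_norm _ _).trans (mul_le_mul_of_nonneg_right hG' (norm_nonneg _))
  rw [Real.norm_eq_abs] at hup ⊢
  exact (abs_le_max_abs_abs lower upper).trans (max_le hinner hup)

noncomputable section

variable {m k : ℕ}

def lassoObjective (lam : ℝ) (x : Fin m → ℝ) (D : EuclideanSpace ℝ (Fin m × Fin k))
    (α : Fin k → ℝ) : ℝ :=
  (1/2) * (∑ i, (x i - ∑ j, D (i, j) * α j)^2) + lam * ∑ j, |α j|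

def lassoGradient (x : Fin m → ℝ) (D : EuclideanSpace ℝ (Fin m × Fin k)) (α : Fin k → ℝ) :
    EuclideanSpace ℝ (Fin m × Fin k) :=
  WithLp.toLp 2 fun p => -(x p.1 - ∑ j, D (p.1, j) * α j) * α p.2

theorem continuous_uncurry_lassoObjective (lam : ℝ) (x : Fin m → ℝ) :
    Continuous (Function.uncurry (lassoObjective (k := k) lam x)) := by
  unfold lassoObjective Function.uncurry
  fun_prop

theorem continuous_uncurry_lassoGradient (x : Fin m → ℝ) :
    Continuous (Function.uncurry (lassoGradient (k := k) x)) := by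
  unfold lassoGradient Function.uncurry
  fun_prop

theorem ContinuousWithinAt.lassoGradient {X : Type*} [TopologicalSpace X] (x : Fin m → ℝ)
    {D : X → EuclideanSpace ℝ (Fin m × Fin k)} {α : X → Fin k → ℝ} {s : Set X} {y : X}
    (hD : ContinuousWithinAt D s y) (hα : ContinuousWithinAt α s y) :
    ContinuousWithinAt (fun y => lassoGradient x (D y) (α y)) s y :=
  -- elaborated without the expected type, which would make unification unfold `lassoGradient`
  ((continuous_uncurry_lassoGradient x).continuousAt.comp_continuousWithinAt (hD.prodMk hα) :)

theorem lassoObjective_add (lam : ℝ) (x : Fin m → ℝ) (D h : EuclideanSpace ℝ (Fin m × Fin k))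
    (α : Fin k → ℝ) :
    lassoObjective lam x (D + h) α = lassoObjective lam x D α + ⟪lassoGradient x D α, h⟫
      + (1/2) * ∑ i, (∑ j, h (i, j) * α j)^2 := by
  have hinner : ⟪lassoGradient x D α, h⟫
      = -∑ i, (x i - ∑ j, D (i, j) * α j) * ∑ j, h (i, j) * α j := by
    simp only [lassoGradient, PiLp.inner_apply, Fintype.sum_prod_type, RCLike.inner_apply,
      conj_trivial, mul_sum, ← sum_neg_distrib]
    refine sum_congr rfl fun i _ => sum_congr rfl fun j _ => ?_
    ring
  have hsq : ∀ i, (x i - ∑ j, (D + h) (i, j) * α j)^2 = (x i - ∑ j, D (i, j) * α j)^2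
      - 2 * ((x i - ∑ j, D (i, j) * α j) * ∑ j, h (i, j) * α j) + (∑ j, h (i, j) * α j)^2 := by
    intro i
    simp only [PiLp.add_apply, add_mul, sum_add_distrib]
    ring
  simp only [lassoObjective, hinner, hsq, sum_add_distrib, sum_sub_distrib, ← mul_sum]
  ring

theorem sum_sq_sum_mul_le (h : EuclideanSpace ℝ (Fin m × Fin k)) (α : Fin k → ℝ) :
    ∑ i, (∑ j, h (i, j) * α j)^2 ≤ (∑ j, α j ^ 2) * ‖h‖ ^ 2 := by
  calc ∑ i, (∑ j, h (i, j) * α j)^2 ≤ ∑ i, (∑ j, h (i, j) ^ 2) * ∑ j, α j ^ 2 :=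
        sum_le_sum fun i _ => sum_mul_sq_le_sq_mul_sq _ _ _
    _ = (∑ j, α j ^ 2) * ‖h‖ ^ 2 := by
        simp only [EuclideanSpace.norm_sq_eq, Real.norm_eq_abs, sq_abs, Fintype.sum_prod_type,
          ← sum_mul]
        ring

theorem hasGradientAt_lassoObjective (lam : ℝ) (x : Fin m → ℝ)
    (D : EuclideanSpace ℝ (Fin m × Fin k)) (α : Fin k → ℝ) :
    HasGradientAt (lassoObjective lam x · α) (lassoGradient x D α) D := by
  rw [hasGradientAt_iff_isLittleO_nhds_zero]
  refine Asymptotics.IsBigO.trans_isLittleO (g := fun h => ‖h‖ ^ 2) ?_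
    (Asymptotics.isLittleO_norm_pow_id one_lt_two)
  refine Asymptotics.IsBigO.of_bound ((1/2) * ∑ j, α j ^ 2) (Eventually.of_forall fun h => ?_)
  have hq : 0 ≤ ∑ i, (∑ j, h (i, j) * α j)^2 := sum_nonneg fun i _ => sq_nonneg _
  rw [lassoObjective_add, add_assoc, add_sub_cancel_left, add_sub_cancel_left, Real.norm_eq_abs,
    norm_pow, norm_norm, abs_of_nonneg (by positivity)]
  linarith [sum_sq_sum_mul_le h α]

theorem lassoObjective_add_inner_le (lam : ℝ) (x : Fin m → ℝ)
    (D D' : EuclideanSpace ℝ (Fin m × Fin k)) (α : Fin k → ℝ) :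
    lassoObjective lam x D α + ⟪lassoGradient x D α, D' - D⟫ ≤ lassoObjective lam x D' α := by
  have hq : 0 ≤ ∑ i, (∑ j, (D' - D) (i, j) * α j)^2 := sum_nonneg fun i _ => sq_nonneg _
  have hexp := lassoObjective_add lam x D (D' - D) α
  rw [add_sub_cancel] at hexp
  linarith

theorem norm_le_of_lassoObjective_le_at_zero {lam : ℝ} (hlam : 0 < lam) (x : Fin m → ℝ)
    (D : EuclideanSpace ℝ (Fin m × Fin k)) {α : Fin k → ℝ}
    (hα : lassoObjective lam x D α ≤ lassoObjective lam x D 0) :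
    ‖α‖ ≤ (∑ i, x i ^ 2) / (2 * lam) := by
  have hsum : ‖α‖ ≤ ∑ j, |α j| :=
    (pi_norm_le_iff_of_nonneg (sum_nonneg fun j _ => abs_nonneg _)).2 fun j =>
      single_le_sum (f := fun j => |α j|) (fun j _ => abs_nonneg _) (mem_univ j)
  have hres : 0 ≤ ∑ i, (x i - ∑ j, D (i, j) * α j)^2 := sum_nonneg fun i _ => sq_nonneg _
  simp only [lassoObjective, Pi.zero_apply, mul_zero, sum_const_zero, sub_zero, abs_zero] at hα
  rw [le_div_iff₀ (by positivity)]
  nlinarith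

end

theorem lasso_value_continuously_differentiable_general (m k : ℕ) (lam : ℝ) (hlam : 0 < lam)
    (K : Set (Fin m → ℝ))
    (Cset : Set (EuclideanSpace ℝ (Fin m × Fin k)))
    (αstar : (Fin m → ℝ) → EuclideanSpace ℝ (Fin m × Fin k) → (Fin k → ℝ))
    (hαstar : ∀ x ∈ K, ∀ Dm ∈ Cset, ∀ β : Fin k → ℝ, β ≠ αstar x Dm →
        (1/2) * (∑ i, (x i - ∑ j, Dm (i, j) * αstar x Dm j)^2) +
            lam * ∑ j, |αstar x Dm j| <
        (1/2) * (∑ i, (x i - ∑ j, Dm (i, j) * β j)^2) + lam * ∑ j, |β j|)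
    (ℓfun : (Fin m → ℝ) → EuclideanSpace ℝ (Fin m × Fin k) → ℝ)
    (hℓ : ∀ x Dm, ℓfun x Dm = ⨅ α : Fin k → ℝ,
        ((1/2) * (∑ i, (x i - ∑ j, Dm (i, j) * α j)^2) + lam * ∑ j, |α j|)) :
    ∀ x ∈ K, ∀ Dm ∈ Cset,
      HasGradientWithinAt (ℓfun x)
        ((WithLp.toLp 2 (fun p : Fin m × Fin k =>
            -(x p.1 - ∑ j, Dm (p.1, j) * αstar x Dm j) * αstar x Dm p.2) :
          EuclideanSpace ℝ (Fin m × Fin k))) Cset Dm ∧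
      ContinuousOn (fun Dm' : EuclideanSpace ℝ (Fin m × Fin k) =>
        ((WithLp.toLp 2 (fun p : Fin m × Fin k =>
            -(x p.1 - ∑ j, Dm' (p.1, j) * αstar x Dm' j) * αstar x Dm' p.2) :
          EuclideanSpace ℝ (Fin m × Fin k)))) Cset := by
  intro x hx
  have hmin : ∀ D ∈ Cset, ∀ β, lassoObjective lam x D (αstar x D) ≤ lassoObjective lam x D β := by
    intro D hD β
    rcases eq_or_ne β (αstar x D) with rfl | hne
    · exact le_rfl
    · exact (hαstar x hx D hD β hne).le
  have hval : ∀ D ∈ Cset, ℓfun x D = lassoObjective lam x D (αstar x D) := by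
    intro D hD
    rw [hℓ]
    exact IsGLB.ciInf_eq (IsLeast.isGLB ⟨⟨αstar x D, rfl⟩, by rintro _ ⟨β, rfl⟩; exact hmin D hD β⟩)
  have hcont : ∀ D ∈ Cset, ContinuousWithinAt (αstar x) Cset D := fun D hD =>
    continuousWithinAt_of_isMinimizer (continuous_uncurry_lassoObjective lam x)
      (isCompact_closedBall 0 _)
      (fun D' hD' => mem_closedBall_zero_iff.2
        (norm_le_of_lassoObjective_le_at_zero hlam x D' (hmin D' hD' 0))) hmin
      fun β hβ => by_contra fun hne => (hαstar x hx D hD β hne).not_ge hβ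
  intro D hD
  refine ⟨?_, fun D' hD' => ?_⟩
  · have hgrad := hasGradientWithinAt_apply_minimizer hD hmin (lassoObjective_add_inner_le lam x D)
      (hasGradientAt_lassoObjective lam x D (αstar x D)).hasFDerivAt.hasFDerivWithinAt
      (continuousWithinAt_const.lassoGradient x (hcont D hD))
    exact hgrad.congr_of_mem hval hD
  · exact continuousWithinAt_id.lassoGradient x (hcont D' hD')

/-- Regularity of the Lasso optimal value: if for every `x ∈ K` and every dictionary
`D` in the constraint set the Lasso solution `α★(x,D)` is unique, then
`ℓ(x,·) = min_α (1/2)‖x − Dα‖₂² + λ‖α‖₁` is continuously differentiable on the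
constraint set with gradient `−(x − Dα★(x,D)) α★(x,D)ᵀ`. -/
theorem lasso_value_continuously_differentiable (m k : ℕ) (lam : ℝ) (hlam : 0 < lam)
    (K : Set (Fin m → ℝ)) (hK : IsCompact K)
    (Cset : Set (EuclideanSpace ℝ (Fin m × Fin k)))
    (hC : Cset = {Dm | ∀ j : Fin k, ∑ i, (Dm (i, j))^2 ≤ 1})
    (αstar : (Fin m → ℝ) → EuclideanSpace ℝ (Fin m × Fin k) → (Fin k → ℝ))
    (hαstar : ∀ x ∈ K, ∀ Dm ∈ Cset, ∀ β : Fin k → ℝ, β ≠ αstar x Dm →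
        (1/2) * (∑ i, (x i - ∑ j, Dm (i, j) * αstar x Dm j)^2) +
            lam * ∑ j, |αstar x Dm j| <
        (1/2) * (∑ i, (x i - ∑ j, Dm (i, j) * β j)^2) + lam * ∑ j, |β j|)
    (ℓfun : (Fin m → ℝ) → EuclideanSpace ℝ (Fin m × Fin k) → ℝ)
    (hℓ : ∀ x Dm, ℓfun x Dm = ⨅ α : Fin k → ℝ,
        ((1/2) * (∑ i, (x i - ∑ j, Dm (i, j) * α j)^2) + lam * ∑ j, |α j|)) :
    ∀ x ∈ K, ∀ Dm ∈ Cset,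
      HasGradientWithinAt (ℓfun x)
        ((WithLp.toLp 2 (fun p : Fin m × Fin k =>
            -(x p.1 - ∑ j, Dm (p.1, j) * αstar x Dm j) * αstar x Dm p.2) :
          EuclideanSpace ℝ (Fin m × Fin k))) Cset Dm ∧
      ContinuousOn (fun Dm' : EuclideanSpace ℝ (Fin m × Fin k) =>
        ((WithLp.toLp 2 (fun p : Fin m × Fin k =>
            -(x p.1 - ∑ j, Dm' (p.1, j) * αstar x Dm' j) * αstar x Dm' p.2) :
          EuclideanSpace ℝ (Fin m × Fin k)))) Cset :=
  lasso_value_continuously_differentiable_general m k lam hlam K Cset αstar hαstar ℓfun hℓ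
end

section
/- Under the assumptions that the data distribution has compact support K, and that there exists κ₂ > 0 such that for all x ∈ K and all D ∈ C the matrix D_Λᵀ D_Λ (for Λ the active inequality set of the Lasso optimality conditions) has smallest eigenvalue ≥ κ₂, the map (x, D) ↦ α★(x, D) giving the unique Lasso solution is uniformly Lipschitz on K × C. -/
/-!
A minimiser `a` of the Lasso objective `f(b) = ‖x - D b‖² / 2 + λ ‖b‖₁` satisfies
`f(a) + ‖D (b - a)‖² / 4 ≤ f(b)` for every `b` (midpoint convexity). Adding this inequality for
the minimisers `a, a'` of two problems `(x, D)`, `(x', D')` bounds `‖D (a - a')‖²` by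
`4M ‖a - a'‖` times the size of the perturbation of the data, where `M` depends only on bounds
for `x`, `D` and the solutions. Consequently the fit `D a`, hence every correlation
`d_jᵀ (x - D a)`, depends continuously on the data; by the first-order condition
`a_j ≠ 0 → |d_jᵀ (x - D a)| = λ`, a coordinate whose correlation at `(x₀, D₀)` differs from `λ`
vanishes near `(x₀, D₀)`. There `a - a'` is supported on the active set `Λ` of `(x₀, D₀)`, on
which `‖D v‖² ≥ (κ₂ / 4) ‖v‖²` still holds for `D` close to `D₀`, so
`‖a - a'‖ ≤ (16 M / κ₂) · dist`. This local constant is the same everywhere; a Lebesgue number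
of the compact set `K × C` and the boundedness of the solutions handle pairs that are far apart.
-/

open Finset Filter Topology Set WithLp Matrix

-- `‖D‖` is the Frobenius norm of a matrix; `‖v‖` is the sup norm of `v : ι → ℝ`, whose
-- Euclidean norm is written `‖toLp 2 v‖`.
attribute [local instance] Matrix.frobeniusNormedAddCommGroup Matrix.frobeniusNormedSpace

section PenalizedLeastSquares

variable {E F : Type*} [NormedAddCommGroup E] [InnerProductSpace ℝ E] [AddCommGroup F] [Module ℝ F]

noncomputable def penalizedLeastSquares (A : F →ₗ[ℝ] E) (g : F → ℝ) (x : E) (b : F) : ℝ :=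
  ‖x - A b‖ ^ 2 / 2 + g b

variable {A A' : F →ₗ[ℝ] E} {g : F → ℝ} {x x' : E} {a a' : F}

theorem penalizedLeastSquares_add_le_of_isMinOn (hg : ConvexOn ℝ univ g)
    (ha : IsMinOn (penalizedLeastSquares A g x) univ a) (b : F) :
    penalizedLeastSquares A g x a + ‖A (b - a)‖ ^ 2 / 4 ≤ penalizedLeastSquares A g x b := by
  set c := (1 / 2 : ℝ) • a + (1 / 2 : ℝ) • b
  have hc := isMinOn_iff.mp ha c (mem_univ c)
  have hgc : g c ≤ g a / 2 + g b / 2 := by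
    have := hg.2 (mem_univ a) (mem_univ b) (by norm_num : (0 : ℝ) ≤ 1 / 2)
      (by norm_num : (0 : ℝ) ≤ 1 / 2) (by norm_num)
    simp only [smul_eq_mul] at this
    linarith
  have hpar := parallelogram_law_with_norm ℝ (x - A a) (x - A b)
  have e₁ : x - A a + (x - A b) = (2 : ℝ) • (x - A c) := by
    simp only [c, map_add, map_smul]; module
  have e₂ : x - A a - (x - A b) = A (b - a) := by rw [map_sub]; abel
  have e₃ : ‖(2 : ℝ) • (x - A c)‖ ^ 2 = 4 * ‖x - A c‖ ^ 2 := by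
    rw [norm_smul, mul_pow]; norm_num
  rw [e₁, e₂, e₃] at hpar
  simp only [penalizedLeastSquares] at hc ⊢
  linarith

theorem norm_sq_map_sub_le_of_isMinOn (hg : ConvexOn ℝ univ g)
    (ha : IsMinOn (penalizedLeastSquares A g x) univ a)
    (ha' : IsMinOn (penalizedLeastSquares A' g x') univ a') :
    ‖A (a - a')‖ ^ 2 ≤ 2 * (‖(A - A') (a - a')‖ * ‖(2 : ℝ) • x - A (a + a')‖ +
      ‖A' (a - a')‖ * ‖(2 : ℝ) • (x - x') - (A - A') (a + a')‖) := by
  have h := penalizedLeastSquares_add_le_of_isMinOn hg ha a'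
  have h' := penalizedLeastSquares_add_le_of_isMinOn hg ha' a
  simp only [penalizedLeastSquares] at h h'
  have hsym : ‖A (a' - a)‖ = ‖A (a - a')‖ := by rw [← neg_sub, map_neg, norm_neg]
  -- `‖p‖² - ‖q‖² = ⟪p - q, p + q⟫` for the residuals of `a` and `a'` in both problems
  have e : ‖x - A a'‖ ^ 2 - ‖x - A a‖ ^ 2 + (‖x' - A' a‖ ^ 2 - ‖x' - A' a'‖ ^ 2) =
      inner ℝ ((A - A') (a - a')) ((2 : ℝ) • x - A (a + a')) +
      inner ℝ (A' (a - a')) ((2 : ℝ) • (x - x') - (A - A') (a + a')) := by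
    simp only [← real_inner_self_eq_norm_sq, LinearMap.sub_apply, map_sub, map_add,
      inner_sub_left, inner_sub_right, inner_add_right, inner_smul_right, real_inner_comm]
    ring
  have c₁ := real_inner_le_norm ((A - A') (a - a')) ((2 : ℝ) • x - A (a + a'))
  have c₂ := real_inner_le_norm (A' (a - a')) ((2 : ℝ) • (x - x') - (A - A') (a + a'))
  rw [hsym] at h
  linarith [sq_nonneg ‖A' (a - a')‖]

theorem inner_map_sub_eq_of_isMinOn (ha : IsMinOn (penalizedLeastSquares A g x) univ a) {v : F}
    {g' : ℝ} (hg : HasDerivAt (fun t : ℝ => g (a + t • v)) g' 0) :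
    inner ℝ (A v) (x - A a) = g' := by
  have hres : HasDerivAt (fun t : ℝ => x - A (a + t • v)) (-A v) 0 := by
    have := ((hasDerivAt_id (0 : ℝ)).smul_const (A v)).const_sub (x - A a)
    simp only [id, one_smul] at this
    convert this using 2 with t
    rw [map_add, map_smul]; abel
  have hmin : IsLocalMin ((fun t : ℝ => ‖x - A (a + t • v)‖ ^ 2 / 2) + fun t => g (a + t • v)) 0 :=
    Eventually.of_forall fun t => by
      simpa [penalizedLeastSquares] using isMinOn_iff.mp ha (a + t • v) (mem_univ _)
  have := hmin.hasDerivAt_eq_zero ((hres.norm_sq.div_const 2).add hg)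
  simp only [zero_smul, add_zero, inner_neg_right, real_inner_comm] at this
  linarith

end PenalizedLeastSquares

theorem IsCompact.exists_forall_le_mul_of_local {X : Type*} [PseudoMetricSpace X] {S : Set X}
    (hS : IsCompact S) {F d : X → X → ℝ} {C L₀ : ℝ} (hC : 0 ≤ C)
    (hF : ∀ p ∈ S, ∀ q ∈ S, F p q ≤ C) (hd : ∀ p ∈ S, ∀ q ∈ S, dist p q ≤ d p q)
    (hloc : ∀ p ∈ S, ∃ U ∈ 𝓝[S] p, ∀ q ∈ U, ∀ r ∈ U, F q r ≤ L₀ * d q r) :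
    ∃ L > 0, ∀ p ∈ S, ∀ q ∈ S, F p q ≤ L * d p q := by
  choose U hU hUF using hloc
  obtain ⟨V, hV, hVU⟩ := lebesgue_number_lemma_nhdsWithin' hS hU
  obtain ⟨δ, hδ, hδV⟩ := Metric.mem_uniformity_dist.mp hV
  refine ⟨max (max L₀ (C / δ)) 1, lt_max_of_lt_right one_pos, fun p hp q hq => ?_⟩
  have hdpq : 0 ≤ d p q := dist_nonneg.trans (hd p hp q hq)
  rcases lt_or_ge (dist p q) δ with hclose | hfar
  · obtain ⟨⟨r, hr⟩, hsub⟩ := hVU p hp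
    calc F p q ≤ L₀ * d p q :=
          hUF r hr p (hsub ⟨refl_mem_uniformity hV, hp⟩) q (hsub ⟨hδV hclose, hq⟩)
      _ ≤ _ := by gcongr; exact (le_max_left _ _).trans (le_max_left _ _)
  · calc F p q ≤ C / δ * δ := by rw [div_mul_cancel₀ C hδ.ne']; exact hF p hp q hq
      _ ≤ C / δ * d p q := by gcongr; exact hfar.trans (hd p hp q hq)
      _ ≤ _ := by gcongr; exact (le_max_right _ _).trans (le_max_left _ _)

section MulVecL2

variable {ι κ : Type*} [Fintype κ]

noncomputable def Matrix.mulVecL2 (D : Matrix ι κ ℝ) : (κ → ℝ) →ₗ[ℝ] EuclideanSpace ℝ ι :=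
  (WithLp.linearEquiv 2 ℝ (ι → ℝ)).symm.toLinearMap ∘ₗ D.mulVecLin

@[simp]
theorem Matrix.mulVecL2_apply (D : Matrix ι κ ℝ) (v : κ → ℝ) : D.mulVecL2 v = toLp 2 (D *ᵥ v) :=
  rfl

theorem Matrix.mulVecL2_sub (D D' : Matrix ι κ ℝ) :
    D.mulVecL2 - D'.mulVecL2 = (D - D').mulVecL2 := by
  ext v i
  simp [sub_mulVec]

end MulVecL2

section EuclideanNorms

variable {ι κ : Type*} [Fintype ι] [Fintype κ]

theorem norm_toLp_two_eq_sqrt (v : ι → ℝ) : ‖toLp 2 v‖ = √(∑ i, v i ^ 2) := by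
  simp [EuclideanSpace.norm_eq]

theorem norm_le_norm_toLp_two (v : ι → ℝ) : ‖v‖ ≤ ‖toLp 2 v‖ :=
  (pi_norm_le_iff_of_nonneg (norm_nonneg _)).2 fun i => PiLp.norm_apply_le (toLp 2 v) i

theorem Prod.dist_le_norm_toLp_two_add_norm (p q : (ι → ℝ) × Matrix ι κ ℝ) :
    dist p q ≤ ‖toLp 2 (p.1 - q.1)‖ + ‖p.2 - q.2‖ := by
  rw [Prod.dist_eq, dist_eq_norm, dist_eq_norm]
  exact max_le (le_add_of_le_of_nonneg (norm_le_norm_toLp_two _) (norm_nonneg _))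
    (le_add_of_nonneg_left (norm_nonneg _))

theorem norm_toLp_two_le_sum_abs (v : ι → ℝ) : ‖toLp 2 v‖ ≤ ∑ i, |v i| := by
  rw [EuclideanSpace.norm_eq, Real.sqrt_le_left (sum_nonneg fun i _ => abs_nonneg (v i))]
  simpa using sum_sq_le_sq_sum_of_nonneg (s := Finset.univ) fun i _ => abs_nonneg (v i)

theorem Matrix.frobenius_norm_eq_sqrt (D : Matrix ι κ ℝ) : ‖D‖ = √(∑ i, ∑ j, D i j ^ 2) := by
  simp [frobenius_norm_def, Real.sqrt_eq_rpow]

theorem Matrix.frobenius_norm_le_sqrt_card {D : Matrix ι κ ℝ} (hD : ∀ j, ∑ i, D i j ^ 2 ≤ 1) :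
    ‖D‖ ≤ √(Fintype.card κ) := by
  rw [frobenius_norm_eq_sqrt, Finset.sum_comm]
  gcongr
  simpa using Finset.sum_le_sum fun j (_ : j ∈ Finset.univ) => hD j

theorem Matrix.isCompact_setOf_forall_sum_sq_le_one :
    IsCompact {D : Matrix ι κ ℝ | ∀ j, ∑ i, D i j ^ 2 ≤ 1} := by
  refine Metric.isCompact_of_isClosed_isBounded ?_ ?_
  · simp only [Set.ofPred_forall]
    exact isClosed_iInter fun j => isClosed_le (by fun_prop) continuous_const
  · exact (Metric.isBounded_closedBall (x := 0) (r := √(Fintype.card κ))).subset fun D hD => by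
      simpa using frobenius_norm_le_sqrt_card hD

theorem Matrix.norm_mulVecL2_le (D : Matrix ι κ ℝ) (v : κ → ℝ) :
    ‖D.mulVecL2 v‖ ≤ ‖D‖ * ‖toLp 2 v‖ := by
  have := frobenius_norm_mul D (replicateCol Unit v)
  rwa [← replicateCol_mulVec, frobenius_norm_replicateCol, frobenius_norm_replicateCol] at this

theorem Matrix.mul_norm_sq_le_norm_sq_mulVecL2_of_norm_sub_le {D D₀ : Matrix ι κ ℝ} {v : κ → ℝ}
    {c : ℝ} (hc : 0 ≤ c) (h₀ : c * ‖toLp 2 v‖ ^ 2 ≤ ‖D₀.mulVecL2 v‖ ^ 2)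
    (hD : ‖D - D₀‖ ≤ √c / 2) :
    c / 4 * ‖toLp 2 v‖ ^ 2 ≤ ‖D.mulVecL2 v‖ ^ 2 := by
  have h₁ : √c * ‖toLp 2 v‖ ≤ ‖D₀.mulVecL2 v‖ := by
    refine (pow_le_pow_iff_left₀ (by positivity) (norm_nonneg _) two_ne_zero).1 ?_
    rwa [mul_pow, Real.sq_sqrt hc]
  have h₂ : ‖D₀.mulVecL2 v‖ ≤ ‖D.mulVecL2 v‖ + ‖D - D₀‖ * ‖toLp 2 v‖ := by
    calc ‖D₀.mulVecL2 v‖ = ‖D.mulVecL2 v - (D - D₀).mulVecL2 v‖ := by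
          rw [← mulVecL2_sub]; simp
      _ ≤ _ := (norm_sub_le _ _).trans (add_le_add_right ((D - D₀).norm_mulVecL2_le v) _)
  have h₃ : √c / 2 * ‖toLp 2 v‖ ≤ ‖D.mulVecL2 v‖ := by
    nlinarith [mul_le_mul_of_nonneg_right hD (norm_nonneg (toLp 2 v))]
  calc c / 4 * ‖toLp 2 v‖ ^ 2 = (√c / 2 * ‖toLp 2 v‖) ^ 2 := by
        rw [mul_pow, div_pow, Real.sq_sqrt hc]; ring
    _ ≤ ‖D.mulVecL2 v‖ ^ 2 := by gcongr

end EuclideanNorms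

namespace Lasso

section Objective

variable {ι κ : Type*} [Fintype ι] [Fintype κ] {lam : ℝ} {x x' : ι → ℝ} {D D' : Matrix ι κ ℝ}
  {a a' : κ → ℝ}

noncomputable def penalty (lam : ℝ) (b : κ → ℝ) : ℝ := lam * ∑ j, |b j|

noncomputable def objective (lam : ℝ) (x : ι → ℝ) (D : Matrix ι κ ℝ) : (κ → ℝ) → ℝ :=
  penalizedLeastSquares D.mulVecL2 (penalty lam) (toLp 2 x)

noncomputable def correlation (x : ι → ℝ) (D : Matrix ι κ ℝ) (a : κ → ℝ) (j : κ) : ℝ :=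
  ∑ i, D i j * (x i - (D *ᵥ a) i)

theorem objective_apply (b : κ → ℝ) :
    objective lam x D b = 1 / 2 * ∑ i, (x i - (D *ᵥ b) i) ^ 2 + lam * ∑ j, |b j| := by
  rw [objective, penalizedLeastSquares, penalty, EuclideanSpace.norm_sq_eq]
  simp only [mulVecL2_apply, PiLp.sub_apply, Real.norm_eq_abs, sq_abs]
  ring

theorem isMinOn_objective_of_forall_ne_lt
    (h : ∀ b, b ≠ a → 1 / 2 * ∑ i, (x i - (D *ᵥ a) i) ^ 2 + lam * ∑ j, |a j| <
      1 / 2 * ∑ i, (x i - (D *ᵥ b) i) ^ 2 + lam * ∑ j, |b j|) :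
    IsMinOn (objective lam x D) univ a := by
  refine isMinOn_iff.2 fun b _ => ?_
  rcases eq_or_ne b a with rfl | hne
  · exact le_rfl
  · simpa only [objective_apply] using (h b hne).le

theorem convexOn_penalty (hlam : 0 ≤ lam) : ConvexOn ℝ univ (penalty (κ := κ) lam) := by
  refine ⟨convex_univ, fun b _ c _ s t hs ht hst => ?_⟩
  simp only [penalty, smul_eq_mul, Pi.add_apply, Pi.smul_apply]
  have : ∑ j, |s * b j + t * c j| ≤ s * ∑ j, |b j| + t * ∑ j, |c j| := by
    rw [Finset.mul_sum, Finset.mul_sum, ← Finset.sum_add_distrib]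
    refine Finset.sum_le_sum fun j _ => (abs_add_le _ _).trans_eq ?_
    rw [abs_mul, abs_mul, abs_of_nonneg hs, abs_of_nonneg ht]
  nlinarith [mul_le_mul_of_nonneg_left this hlam]

theorem hasDerivAt_penalty [DecidableEq κ] (b : κ → ℝ) {j : κ} (hj : b j ≠ 0) :
    HasDerivAt (fun t : ℝ => penalty lam (b + t • Pi.single j 1))
      (lam * SignType.sign (b j)) 0 := by
  have hterm : ∀ l, HasDerivAt (fun t : ℝ => |b l + t * (Pi.single j 1 : κ → ℝ) l|)
      (SignType.sign (b l) * (Pi.single j 1 : κ → ℝ) l) 0 := by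
    intro l
    rcases eq_or_ne l j with rfl | hl
    · simpa using HasDerivAt.comp_const_add (b l) 0 (by simpa using hasDerivAt_abs hj)
    · simpa [hl] using hasDerivAt_const (0 : ℝ) |b l|
  refine ((HasDerivAt.fun_sum (u := Finset.univ) fun l _ => hterm l).const_mul lam).congr_deriv ?_
  rw [Finset.sum_eq_single j (fun l _ hl => by simp [hl]) (by simp)]
  simp

theorem abs_correlation_eq_of_isMinOn (hlam : 0 ≤ lam) (ha : IsMinOn (objective lam x D) univ a)
    {j : κ} (hj : a j ≠ 0) : |correlation x D a j| = lam := by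
  classical
  have h := inner_map_sub_eq_of_isMinOn ha (hasDerivAt_penalty a hj)
  have hcorr : inner ℝ (D.mulVecL2 (Pi.single j 1)) (toLp 2 x - D.mulVecL2 a) =
      correlation x D a j := by
    simp [correlation, PiLp.inner_apply, mul_comm]
  rw [← hcorr, h, abs_mul, abs_of_nonneg hlam]
  rcases hj.lt_or_gt with h | h <;> simp [h]

theorem norm_toLp_le_of_isMinOn (hlam : 0 < lam) (ha : IsMinOn (objective lam x D) univ a) :
    ‖toLp 2 a‖ ≤ ‖toLp 2 x‖ ^ 2 / (2 * lam) := by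
  have h := isMinOn_iff.mp ha 0 (mem_univ 0)
  simp only [objective, penalizedLeastSquares, penalty, map_zero, sub_zero, Pi.zero_apply,
    abs_zero, sum_const_zero, mul_zero, add_zero] at h
  rw [le_div_iff₀ (by positivity)]
  nlinarith [norm_toLp_two_le_sum_abs a, sq_nonneg ‖toLp 2 x - D.mulVecL2 a‖]

theorem norm_sq_mulVecL2_sub_le_of_isMinOn {R B S : ℝ} (hlam : 0 ≤ lam)
    (ha : IsMinOn (objective lam x D) univ a) (ha' : IsMinOn (objective lam x' D') univ a')
    (hx : ‖toLp 2 x‖ ≤ R) (haB : ‖toLp 2 a‖ ≤ B) (ha'B : ‖toLp 2 a'‖ ≤ B) (hD : ‖D‖ ≤ S)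
    (hD' : ‖D'‖ ≤ S) :
    ‖D.mulVecL2 (a - a')‖ ^ 2 ≤
      4 * (R + 2 * S * B + S) * (‖toLp 2 (x - x')‖ + ‖D - D'‖) * ‖toLp 2 (a - a')‖ := by
  have h := norm_sq_map_sub_le_of_isMinOn (convexOn_penalty hlam) ha ha'
  rw [Matrix.mulVecL2_sub] at h
  have hR : 0 ≤ R := (norm_nonneg _).trans hx
  have hB : 0 ≤ B := (norm_nonneg _).trans haB
  have hS : 0 ≤ S := (norm_nonneg _).trans hD
  have hsum : ‖toLp 2 (a + a')‖ ≤ 2 * B := by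
    rw [toLp_add]; linarith [norm_add_le (toLp 2 a) (toLp 2 a')]
  have hΔ := (D - D').norm_mulVecL2_le (a - a')
  have hu' : ‖D'.mulVecL2 (a - a')‖ ≤ S * ‖toLp 2 (a - a')‖ :=
    (D'.norm_mulVecL2_le _).trans (by gcongr)
  have hw : ‖(2 : ℝ) • toLp 2 x - D.mulVecL2 (a + a')‖ ≤ 2 * R + S * (2 * B) := by
    refine (norm_sub_le _ _).trans (add_le_add ?_ ((D.norm_mulVecL2_le _).trans (by gcongr)))
    rw [norm_smul, Real.norm_two]; gcongr
  have hw' : ‖(2 : ℝ) • (toLp 2 x - toLp 2 x') - (D - D').mulVecL2 (a + a')‖ ≤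
      2 * ‖toLp 2 (x - x')‖ + ‖D - D'‖ * (2 * B) := by
    refine (norm_sub_le _ _).trans
      (add_le_add ?_ (((D - D').norm_mulVecL2_le _).trans (by gcongr)))
    rw [norm_smul, Real.norm_two, toLp_sub]
  calc ‖D.mulVecL2 (a - a')‖ ^ 2
      ≤ 2 * (‖D - D'‖ * ‖toLp 2 (a - a')‖ * (2 * R + S * (2 * B)) +
          S * ‖toLp 2 (a - a')‖ * (2 * ‖toLp 2 (x - x')‖ + ‖D - D'‖ * (2 * B))) := by
        refine h.trans ?_
        gcongr
    _ ≤ _ := by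
        have hu := norm_nonneg (toLp 2 (a - a'))
        have hε := norm_nonneg (toLp 2 (x - x'))
        have hδ := norm_nonneg (D - D')
        nlinarith [mul_nonneg (mul_nonneg hu hε) hR,
          mul_nonneg (mul_nonneg hu hε) (mul_nonneg hS hB),
          mul_nonneg (mul_nonneg hu hδ) hS]

theorem norm_mulVecL2_sub_le_of_isMinOn {R B S : ℝ} (hlam : 0 ≤ lam)
    (ha : IsMinOn (objective lam x D) univ a) (ha' : IsMinOn (objective lam x' D') univ a')
    (hx : ‖toLp 2 x‖ ≤ R) (haB : ‖toLp 2 a‖ ≤ B) (ha'B : ‖toLp 2 a'‖ ≤ B) (hD : ‖D‖ ≤ S)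
    (hD' : ‖D'‖ ≤ S) :
    ‖D'.mulVecL2 a' - D.mulVecL2 a‖ ≤
      ‖D' - D‖ * B + √(8 * (R + 2 * S * B + S) * B * (‖toLp 2 (x - x')‖ + ‖D - D'‖)) := by
  have hstab := norm_sq_mulVecL2_sub_le_of_isMinOn hlam ha ha' hx haB ha'B hD hD'
  have hdiff : ‖toLp 2 (a - a')‖ ≤ 2 * B := by
    rw [toLp_sub]; linarith [norm_sub_le (toLp 2 a) (toLp 2 a')]
  have hfit : D'.mulVecL2 a' - D.mulVecL2 a = (D' - D).mulVecL2 a' - D.mulVecL2 (a - a') := by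
    rw [← Matrix.mulVecL2_sub, map_sub]; simp
  rw [hfit]
  refine (norm_sub_le _ _).trans
    (add_le_add (((D' - D).norm_mulVecL2_le a').trans (by gcongr)) ?_)
  refine Real.le_sqrt_of_sq_le (hstab.trans ?_)
  have : 0 ≤ 4 * (R + 2 * S * B + S) * (‖toLp 2 (x - x')‖ + ‖D - D'‖) := by
    have := (norm_nonneg _).trans hx; have := (norm_nonneg _).trans haB
    have := (norm_nonneg _).trans hD; positivity
  nlinarith [mul_le_mul_of_nonneg_left hdiff this]

end Objective

section SolutionMap

variable {ι κ : Type*} [Fintype ι] [Fintype κ] {lam : ℝ} {P : Set ((ι → ℝ) × Matrix ι κ ℝ)}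
  {α : (ι → ℝ) × Matrix ι κ ℝ → κ → ℝ} {R B S : ℝ} {p₀ : (ι → ℝ) × Matrix ι κ ℝ}

theorem tendsto_fit (hlam : 0 ≤ lam) (hα : ∀ p ∈ P, IsMinOn (objective lam p.1 p.2) univ (α p))
    (hR : ∀ p ∈ P, ‖toLp 2 p.1‖ ≤ R) (hB : ∀ p ∈ P, ‖toLp 2 (α p)‖ ≤ B)
    (hS : ∀ p ∈ P, ‖p.2‖ ≤ S) (hp₀ : p₀ ∈ P) :
    Tendsto (fun p => p.2.mulVecL2 (α p)) (𝓝[P] p₀) (𝓝 (p₀.2.mulVecL2 (α p₀))) := by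
  rw [tendsto_iff_norm_sub_tendsto_zero]
  have hbound : Tendsto (fun p : (ι → ℝ) × Matrix ι κ ℝ => ‖p.2 - p₀.2‖ * B +
      √(8 * (R + 2 * S * B + S) * B * (‖toLp 2 (p₀.1 - p.1)‖ + ‖p₀.2 - p.2‖))) (𝓝 p₀) (𝓝 0) := by
    have : Continuous fun p : (ι → ℝ) × Matrix ι κ ℝ => ‖p.2 - p₀.2‖ * B +
        √(8 * (R + 2 * S * B + S) * B * (‖toLp 2 (p₀.1 - p.1)‖ + ‖p₀.2 - p.2‖)) := by
      fun_prop
    simpa using this.tendsto p₀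
  refine squeeze_zero' (Eventually.of_forall fun _ => norm_nonneg _) ?_
    (hbound.mono_left nhdsWithin_le_nhds)
  filter_upwards [self_mem_nhdsWithin] with p hp
  exact norm_mulVecL2_sub_le_of_isMinOn hlam (hα p₀ hp₀) (hα p hp) (hR p₀ hp₀) (hB p₀ hp₀)
    (hB p hp) (hS p₀ hp₀) (hS p hp)

theorem tendsto_correlation (hlam : 0 ≤ lam)
    (hα : ∀ p ∈ P, IsMinOn (objective lam p.1 p.2) univ (α p))
    (hR : ∀ p ∈ P, ‖toLp 2 p.1‖ ≤ R) (hB : ∀ p ∈ P, ‖toLp 2 (α p)‖ ≤ B)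
    (hS : ∀ p ∈ P, ‖p.2‖ ≤ S) (hp₀ : p₀ ∈ P) (j : κ) :
    Tendsto (fun p => correlation p.1 p.2 (α p) j) (𝓝[P] p₀)
      (𝓝 (correlation p₀.1 p₀.2 (α p₀) j)) := by
  have hcorr : Continuous fun q : ((ι → ℝ) × Matrix ι κ ℝ) × (ι → ℝ) =>
      ∑ i, q.1.2 i j * (q.1.1 i - q.2 i) := by
    fun_prop
  exact (hcorr.tendsto _).comp ((tendsto_id.mono_left nhdsWithin_le_nhds).prodMk_nhds
    (((PiLp.continuous_ofLp 2 _).tendsto _).comp (tendsto_fit hlam hα hR hB hS hp₀)))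

theorem eventually_apply_eq_zero (hlam : 0 ≤ lam)
    (hα : ∀ p ∈ P, IsMinOn (objective lam p.1 p.2) univ (α p))
    (hR : ∀ p ∈ P, ‖toLp 2 p.1‖ ≤ R) (hB : ∀ p ∈ P, ‖toLp 2 (α p)‖ ≤ B)
    (hS : ∀ p ∈ P, ‖p.2‖ ≤ S) (hp₀ : p₀ ∈ P) {j : κ}
    (hj : |correlation p₀.1 p₀.2 (α p₀) j| ≠ lam) :
    ∀ᶠ p in 𝓝[P] p₀, α p j = 0 := by
  filter_upwards [(tendsto_correlation hlam hα hR hB hS hp₀ j).abs.eventually_ne hj,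
    self_mem_nhdsWithin] with p hp hpP
  by_contra h
  exact hp (abs_correlation_eq_of_isMinOn hlam (hα p hpP) h)

theorem exists_mem_nhdsWithin_norm_sub_le (hlam : 0 ≤ lam)
    (hα : ∀ p ∈ P, IsMinOn (objective lam p.1 p.2) univ (α p))
    (hR : ∀ p ∈ P, ‖toLp 2 p.1‖ ≤ R) (hB : ∀ p ∈ P, ‖toLp 2 (α p)‖ ≤ B)
    (hS : ∀ p ∈ P, ‖p.2‖ ≤ S) (hp₀ : p₀ ∈ P) {κ₂ : ℝ} (hκ₂ : 0 < κ₂)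
    (heig : ∀ v : κ → ℝ, (∀ j, |correlation p₀.1 p₀.2 (α p₀) j| ≠ lam → v j = 0) →
      κ₂ * ‖toLp 2 v‖ ^ 2 ≤ ‖p₀.2.mulVecL2 v‖ ^ 2) :
    ∃ U ∈ 𝓝[P] p₀, ∀ p ∈ U, ∀ q ∈ U, ‖toLp 2 (α p - α q)‖ ≤
      16 * (R + 2 * S * B + S) / κ₂ * (‖toLp 2 (p.1 - q.1)‖ + ‖p.2 - q.2‖) := by
  set inactive := fun j => |correlation p₀.1 p₀.2 (α p₀) j| ≠ lam
  have hsupp : ∀ᶠ p in 𝓝[P] p₀, ∀ j, inactive j → α p j = 0 := by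
    refine eventually_all.2 fun j => ?_
    by_cases hj : inactive j
    · exact (eventually_apply_eq_zero hlam hα hR hB hS hp₀ hj).mono fun p hp _ => hp
    · exact Eventually.of_forall fun p h => absurd h hj
  have hnear : ∀ᶠ p in 𝓝[P] p₀, ‖p.2 - p₀.2‖ ≤ √κ₂ / 2 := by
    have : Continuous fun p : (ι → ℝ) × Matrix ι κ ℝ => ‖p.2 - p₀.2‖ := by fun_prop
    refine ((this.tendsto p₀).mono_left nhdsWithin_le_nhds).eventually_le_const ?_
    simpa using Real.sqrt_pos.2 hκ₂
  refine ⟨{p | p ∈ P ∧ (∀ j, inactive j → α p j = 0) ∧ ‖p.2 - p₀.2‖ ≤ √κ₂ / 2}, ?_, ?_⟩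
  · filter_upwards [self_mem_nhdsWithin, hsupp, hnear] with p h₁ h₂ h₃ using ⟨h₁, h₂, h₃⟩
  rintro p ⟨hpP, hpsupp, hpnear⟩ q ⟨hqP, hqsupp, -⟩
  set u := α p - α q
  have hlow := Matrix.mul_norm_sq_le_norm_sq_mulVecL2_of_norm_sub_le hκ₂.le
    (heig u fun j hj => by simp [u, hpsupp j hj, hqsupp j hj]) hpnear
  have hstab := norm_sq_mulVecL2_sub_le_of_isMinOn hlam (hα p hpP) (hα q hqP) (hR p hpP)
    (hB p hpP) (hB q hqP) (hS p hpP) (hS q hqP)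
  have hM : 0 ≤ 16 * (R + 2 * S * B + S) * (‖toLp 2 (p.1 - q.1)‖ + ‖p.2 - q.2‖) := by
    have := (norm_nonneg _).trans (hR p hpP); have := (norm_nonneg _).trans (hB p hpP)
    have := (norm_nonneg _).trans (hS p hpP); positivity
  rw [div_mul_eq_mul_div, le_div_iff₀ hκ₂]
  rcases (norm_nonneg (toLp 2 u)).eq_or_lt with h0 | hpos
  · rw [← h0]; linarith
  · nlinarith

end SolutionMap

end Lasso

/-- Uniform Lipschitz continuity of the Lasso solution `α★(x,D)` on `K × C`, under
compact support of the data and a uniform lower bound `κ₂` on the smallest eigenvalue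
of `D_Λᵀ D_Λ` over the active sets `Λ = {j : |d_jᵀ(x − Dα★)| = λ}`. -/
theorem lasso_solution_uniformly_lipschitz (m k : ℕ) (lam : ℝ) (hlam : 0 < lam)
    (K : Set (Fin m → ℝ)) (hK : IsCompact K)
    (C : Set (Matrix (Fin m) (Fin k) ℝ))
    (hC : C = {D | ∀ j : Fin k, ∑ i, (D i j)^2 ≤ 1})
    (αstar : (Fin m → ℝ) → Matrix (Fin m) (Fin k) ℝ → (Fin k → ℝ))
    (hαstar : ∀ x ∈ K, ∀ D ∈ C, ∀ β : Fin k → ℝ, β ≠ αstar x D →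
        (1/2) * (∑ i, (x i - D.mulVec (αstar x D) i)^2) + lam * ∑ j, |αstar x D j| <
        (1/2) * (∑ i, (x i - D.mulVec β i)^2) + lam * ∑ j, |β j|)
    (κ₂ : ℝ) (hκ₂ : 0 < κ₂)
    (heig : ∀ x ∈ K, ∀ D ∈ C, ∀ v : Fin k → ℝ,
        (∀ j : Fin k, |∑ i, D i j * (x i - D.mulVec (αstar x D) i)| ≠ lam → v j = 0) →
        ∑ i, (D.mulVec v i)^2 ≥ κ₂ * ∑ j, (v j)^2) :
    ∃ L : ℝ, 0 < L ∧ ∀ x ∈ K, ∀ x' ∈ K, ∀ D ∈ C, ∀ D' ∈ C,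
      Real.sqrt (∑ j, (αstar x D j - αstar x' D' j)^2) ≤
        L * (Real.sqrt (∑ i, (x i - x' i)^2) +
             Real.sqrt (∑ i, ∑ j, (D i j - D' i j)^2)) := by
  subst hC
  set α : (Fin m → ℝ) × Matrix (Fin m) (Fin k) ℝ → Fin k → ℝ := fun p => αstar p.1 p.2
  have hα : ∀ p ∈ K ×ˢ {D | ∀ j : Fin k, ∑ i, (D i j)^2 ≤ 1},
      IsMinOn (Lasso.objective lam p.1 p.2) univ (α p) := fun p hp =>
    Lasso.isMinOn_objective_of_forall_ne_lt (hαstar p.1 hp.1 p.2 hp.2)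
  obtain ⟨R, hR⟩ := hK.exists_bound_of_continuousOn (PiLp.continuous_toLp 2 _).continuousOn
  have hB : ∀ p ∈ K ×ˢ {D | ∀ j : Fin k, ∑ i, (D i j)^2 ≤ 1},
      ‖toLp 2 (α p)‖ ≤ R ^ 2 / (2 * lam) := fun p hp =>
    (Lasso.norm_toLp_le_of_isMinOn hlam (hα p hp)).trans (by gcongr; exact hR p.1 hp.1)
  obtain ⟨L, hL, hLip⟩ :=
    (hK.prod Matrix.isCompact_setOf_forall_sum_sq_le_one).exists_forall_le_mul_of_local
      (F := fun p q => ‖toLp 2 (α p - α q)‖)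
      (d := fun p q => ‖toLp 2 (p.1 - q.1)‖ + ‖p.2 - q.2‖) (C := 2 * (R ^ 2 / (2 * lam)))
      (by positivity)
      (fun p hp q hq => by
        rw [toLp_sub]; linarith [norm_sub_le (toLp 2 (α p)) (toLp 2 (α q)), hB p hp, hB q hq])
      (fun p _ q _ => Prod.dist_le_norm_toLp_two_add_norm p q)
      (fun p hp => Lasso.exists_mem_nhdsWithin_norm_sub_le hlam.le hα (fun q hq => hR q.1 hq.1)
        hB (fun q hq => Matrix.frobenius_norm_le_sqrt_card hq.2) hp hκ₂ fun v hv => by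
          simpa [EuclideanSpace.real_norm_sq_eq] using heig p.1 hp.1 p.2 hp.2 v hv)
  refine ⟨L, hL, fun x hx x' hx' D hD D' hD' => ?_⟩
  simpa only [α, norm_toLp_two_eq_sqrt, Matrix.frobenius_norm_eq_sqrt, Pi.sub_apply,
    Matrix.sub_apply] using hLip (x, D) ⟨hx, hD⟩ (x', D') ⟨hx', hD'⟩
end

section
/- In the online dictionary learning algorithm, if D_t minimizes the surrogate f̂_t over C and D_{t+1} minimizes f̂_{t+1} over C, where f̂_t(D) = (1/t)((1/2)Tr(DᵀD A_t) − Tr(Dᵀ B_t)) with A_t = ∑_{i≤t} α_i α_iᵀ, B_t = ∑_{i≤t} x_i α_iᵀ, and if (1/t)A_t has smallest eigenvalue ≥ κ₁ > 0 and the vectors x_i, α_i are uniformly bounded, then ‖D_{t+1} − D_t‖_F = O(1/t). -/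
/-!
Write `f̂_t = Q(A_t/t, B_t/t)` with `Q(A, B)(D) = ½ Tr(DᵀDA) − Tr(DᵀB)`. Since `D_t` minimises
`f̂_t` on the convex set `C`, comparing it with the midpoint of `D_t` and `D_{t+1}` gives
`f̂_t(D_{t+1}) − f̂_t(D_t) ≥ κ₁/4 ‖D_{t+1} − D_t‖²`. As `D_{t+1}` minimises `f̂_{t+1}`, this is at
most the increment of `f̂_t − f̂_{t+1} = Q(ΔA, ΔB)` from `D_t` to `D_{t+1}`, which is bounded by
`(√k ‖ΔA‖ + ‖ΔB‖) ‖D_{t+1} − D_t‖`. Finally `ΔA = A_t/t − A_{t+1}/(t+1)` and `ΔB` are `O(1/t)`,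
being increments of running means of bounded terms.
-/

open Finset Matrix

attribute [local instance] Matrix.frobeniusNormedAddCommGroup Matrix.frobeniusNormedSpace

namespace Matrix
variable {m n : Type*} [Fintype m]

theorem convex_setOf_sum_sq_le_one : Convex ℝ {X : Matrix m n ℝ | ∀ j, ∑ i, X i j ^ 2 ≤ 1} := by
  intro D hD E hE a b ha hb hab j
  calc ∑ i, (a • D + b • E) i j ^ 2 ≤ ∑ i, (a * D i j ^ 2 + b * E i j ^ 2) := by
        refine Finset.sum_le_sum fun i _ => ?_
        simp only [add_apply, smul_apply, smul_eq_mul]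
        nlinarith [mul_nonneg ha hb, sq_nonneg (D i j - E i j)]
    _ ≤ a * 1 + b * 1 := by
        rw [Finset.sum_add_distrib, ← Finset.mul_sum, ← Finset.mul_sum]
        gcongr
        exacts [hD j, hE j]
    _ = 1 := by rw [mul_one, mul_one, hab]

variable [Fintype n]

theorem frobenius_norm_eq_sqrt_s10 (X : Matrix m n ℝ) : ‖X‖ = √(∑ i, ∑ j, X i j ^ 2) := by
  simp [frobenius_norm_def, Real.sqrt_eq_rpow]

theorem frobenius_norm_sq (X : Matrix m n ℝ) : ‖X‖ ^ 2 = ∑ i, ∑ j, X i j ^ 2 := by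
  rw [frobenius_norm_eq_sqrt_s10, Real.sq_sqrt (by positivity)]

theorem abs_trace_transpose_mul_le (X Y : Matrix m n ℝ) : |trace (Xᵀ * Y)| ≤ ‖X‖ * ‖Y‖ := by
  -- the Frobenius norm is by definition the norm of `PiLp 2 fun _ => PiLp 2 _`
  have h : trace (Xᵀ * Y) = inner ℝ (WithLp.toLp 2 fun i => WithLp.toLp 2 (X i))
      (WithLp.toLp 2 fun i => WithLp.toLp 2 (Y i)) := by
    simp [trace, mul_apply, PiLp.inner_apply, Finset.sum_comm (γ := n), mul_comm]
  rw [h]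
  exact abs_real_inner_le_norm _ _

theorem frobenius_norm_le_of_abs_le {X : Matrix m n ℝ} {c : ℝ} (hc : 0 ≤ c)
    (h : ∀ i j, |X i j| ≤ c) : ‖X‖ ≤ √(Fintype.card m * Fintype.card n) * c := by
  rw [frobenius_norm_eq_sqrt_s10, ← Real.sqrt_sq hc, ← Real.sqrt_mul (by positivity)]
  gcongr
  calc ∑ i, ∑ j, X i j ^ 2 ≤ ∑ _i : m, ∑ _j : n, c ^ 2 := by
        refine Finset.sum_le_sum fun i _ => Finset.sum_le_sum fun j _ => ?_
        exact sq_le_sq' (abs_le.mp (h i j)).1 (abs_le.mp (h i j)).2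
    _ = _ := by simp [mul_assoc]

theorem frobenius_norm_le_sqrt_card_s10 {X : Matrix m n ℝ} (h : ∀ j, ∑ i, X i j ^ 2 ≤ 1) :
    ‖X‖ ≤ √(Fintype.card n) := by
  rw [frobenius_norm_eq_sqrt_s10, Finset.sum_comm]
  gcongr
  simpa using Finset.sum_le_sum fun j (_ : j ∈ univ) => h j

theorem mul_sq_frobenius_norm_le_trace {A : Matrix n n ℝ} {μ : ℝ}
    (hA : ∀ v : n → ℝ, μ * ∑ j, v j ^ 2 ≤ ∑ j, ∑ j', v j * A j j' * v j') (H : Matrix m n ℝ) :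
    μ * ‖H‖ ^ 2 ≤ trace (Hᵀ * H * A) := by
  have h : trace (Hᵀ * H * A) = ∑ i, ∑ j, ∑ j', H i j * A j j' * H i j' := by
    rw [trace_mul_cycle, trace_mul_comm]
    simp only [trace, diag, mul_apply, transpose_apply, Finset.mul_sum, mul_assoc]
  rw [h, frobenius_norm_sq, Finset.mul_sum]
  exact Finset.sum_le_sum fun i _ => hA (H i)

end Matrix

theorem norm_sub_le_of_growth {X : Type*} [SeminormedAddCommGroup X] {f g : X → ℝ} {D E : X}
    {μ L : ℝ} (hμ : 0 < μ) (hL : 0 ≤ L) (hgrowth : μ * ‖E - D‖ ^ 2 ≤ f E - f D) (hgE : g E ≤ g D)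
    (hlip : (f E - g E) - (f D - g D) ≤ L * ‖E - D‖) : ‖E - D‖ ≤ L / μ := by
  rw [le_div_iff₀ hμ]
  rcases (norm_nonneg (E - D)).eq_or_lt with h | h
  · rwa [← h, zero_mul]
  · nlinarith

section Surrogate

variable {m n : Type*} [Fintype m] [Fintype n] (A : Matrix n n ℝ) (B : Matrix m n ℝ)

noncomputable def surrogate (D : Matrix m n ℝ) : ℝ := 1 / 2 * trace (Dᵀ * D * A) - trace (Dᵀ * B)

theorem surrogate_smul (c : ℝ) (D : Matrix m n ℝ) :
    surrogate (c • A) (c • B) D = c * surrogate A B D := by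
  simp only [surrogate, Matrix.mul_smul, trace_smul, smul_eq_mul]
  ring

theorem surrogate_sub_surrogate (A' : Matrix n n ℝ) (B' : Matrix m n ℝ) (D : Matrix m n ℝ) :
    surrogate A B D - surrogate A' B' D = surrogate (A - A') (B - B') D := by
  simp only [surrogate, Matrix.mul_sub, trace_sub]
  ring

theorem surrogate_midpoint (D E : Matrix m n ℝ) :
    surrogate A B (midpoint ℝ D E) =
      (surrogate A B D + surrogate A B E) / 2 - trace ((E - D)ᵀ * (E - D) * A) / 8 := by
  simp only [surrogate, midpoint_eq_smul_add, invOf_eq_inv, transpose_smul, transpose_add,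
    transpose_sub, Matrix.add_mul, Matrix.mul_add, Matrix.sub_mul, Matrix.mul_sub,
    Matrix.smul_mul, Matrix.mul_smul, trace_add, trace_sub, trace_smul, smul_eq_mul]
  ring

theorem surrogate_sub_eq_trace (D E : Matrix m n ℝ) :
    surrogate A B E - surrogate A B D =
      trace ((E - D)ᵀ * ((1 / 2 : ℝ) • (E * A + D * Aᵀ) - B)) := by
  have hcross : trace (Eᵀ * (D * Aᵀ)) = trace (Dᵀ * E * A) := by
    rw [← trace_transpose]; simp [transpose_mul, Matrix.mul_assoc, trace_mul_comm A]
  have hdiag : trace (Dᵀ * (D * Aᵀ)) = trace (Dᵀ * D * A) := by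
    rw [← trace_transpose]; simp [transpose_mul, Matrix.mul_assoc, trace_mul_comm A]
  simp only [surrogate, transpose_sub, Matrix.sub_mul, Matrix.mul_add, Matrix.mul_sub,
    Matrix.mul_smul, trace_add, trace_sub, trace_smul, smul_eq_mul, hcross, hdiag,
    Matrix.mul_assoc]
  ring

theorem surrogate_sub_le {D E : Matrix m n ℝ} {r : ℝ} (hD : ‖D‖ ≤ r) (hE : ‖E‖ ≤ r) :
    surrogate A B E - surrogate A B D ≤ (r * ‖A‖ + ‖B‖) * ‖E - D‖ := by
  have hr : 0 ≤ r := (norm_nonneg D).trans hD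
  have hG : ‖(1 / 2 : ℝ) • (E * A + D * Aᵀ) - B‖ ≤ r * ‖A‖ + ‖B‖ :=
    calc _ ≤ 1 / 2 * (‖E‖ * ‖A‖ + ‖D‖ * ‖Aᵀ‖) + ‖B‖ := by
          grw [norm_sub_le, norm_smul, norm_add_le, frobenius_norm_mul, frobenius_norm_mul]
          norm_num
      _ ≤ r * ‖A‖ + ‖B‖ := by
          rw [frobenius_norm_transpose]
          nlinarith [norm_nonneg A]
  rw [surrogate_sub_eq_trace, mul_comm]
  exact (le_abs_self _).trans <| (abs_trace_transpose_mul_le _ _).trans <|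
    mul_le_mul_of_nonneg_left hG (norm_nonneg _)

theorem surrogate_growth_of_isMinOn {S : Set (Matrix m n ℝ)} (hS : Convex ℝ S)
    {D E : Matrix m n ℝ} (hDmin : IsMinOn (surrogate A B) S D) (hD : D ∈ S) (hE : E ∈ S) {μ : ℝ}
    (hA : ∀ H : Matrix m n ℝ, μ * ‖H‖ ^ 2 ≤ trace (Hᵀ * H * A)) :
    μ / 4 * ‖E - D‖ ^ 2 ≤ surrogate A B E - surrogate A B D := by
  have hmid := hDmin (hS.midpoint_mem hD hE)
  rw [Set.mem_ofPred_eq, surrogate_midpoint] at hmid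
  linarith [hA (E - D)]

theorem norm_sub_le_of_isMinOn_surrogate {A' : Matrix n n ℝ} {B' : Matrix m n ℝ}
    {S : Set (Matrix m n ℝ)} (hS : Convex ℝ S) {r : ℝ} (hSr : ∀ D ∈ S, ‖D‖ ≤ r)
    {D E : Matrix m n ℝ} (hD : D ∈ S) (hE : E ∈ S) (hDmin : IsMinOn (surrogate A B) S D)
    (hEmin : IsMinOn (surrogate A' B') S E) {μ : ℝ} (hμ : 0 < μ)
    (hA : ∀ H : Matrix m n ℝ, μ * ‖H‖ ^ 2 ≤ trace (Hᵀ * H * A)) :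
    ‖E - D‖ ≤ (r * ‖A - A'‖ + ‖B - B'‖) / (μ / 4) := by
  have hlip := surrogate_sub_le (A - A') (B - B') (hSr D hD) (hSr E hE)
  rw [← surrogate_sub_surrogate, ← surrogate_sub_surrogate] at hlip
  have hr : 0 ≤ r := (norm_nonneg D).trans (hSr D hD)
  exact norm_sub_le_of_growth (by positivity) (by positivity)
    (surrogate_growth_of_isMinOn A B hS hDmin hD hE hA) (hEmin hD) hlip

end Surrogate

section RunningMean

variable {E : Type*} [SeminormedAddCommGroup E] [NormedSpace ℝ E]

noncomputable def runningMean (a : ℕ → E) (t : ℕ) : E := (t : ℝ)⁻¹ • ∑ i ∈ Icc 1 t, a i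

theorem norm_runningMean_sub_succ_le {a : ℕ → E} {K : ℝ} (ha : ∀ i, ‖a i‖ ≤ K) {t : ℕ}
    (ht : 1 ≤ t) : ‖runningMean a t - runningMean a (t + 1)‖ ≤ 2 * K / t := by
  have ht0 : (0 : ℝ) < t := by exact_mod_cast ht
  have hK : 0 ≤ K := (norm_nonneg _).trans (ha 0)
  have hsum : ‖∑ i ∈ Icc 1 t, a i‖ ≤ t * K := by
    simpa using norm_sum_le_of_le (Icc 1 t) fun i _ => ha i
  have hcoef : (0 : ℝ) ≤ (t : ℝ)⁻¹ - ((t : ℝ) + 1)⁻¹ := by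
    rw [sub_nonneg]; gcongr; linarith
  have key : runningMean a t - runningMean a (t + 1) =
      ((t : ℝ)⁻¹ - ((t : ℝ) + 1)⁻¹) • ∑ i ∈ Icc 1 t, a i - ((t : ℝ) + 1)⁻¹ • a (t + 1) := by
    rw [runningMean, runningMean, Finset.sum_Icc_succ_top (by omega), Nat.cast_succ]
    module
  calc ‖runningMean a t - runningMean a (t + 1)‖
      ≤ ((t : ℝ)⁻¹ - ((t : ℝ) + 1)⁻¹) * (t * K) + ((t : ℝ) + 1)⁻¹ * K := by
        rw [key]
        grw [norm_sub_le, norm_smul, norm_smul, hsum, ha, Real.norm_of_nonneg hcoef,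
          Real.norm_of_nonneg (by positivity)]
    _ = 2 * K / (t + 1) := by field_simp; ring
    _ ≤ 2 * K / t := by gcongr; linarith

end RunningMean

theorem Matrix.frobenius_norm_runningMean_vecMulVec_sub_succ_le {m n : Type*} [Fintype m]
    [Fintype n] {u : ℕ → m → ℝ} {v : ℕ → n → ℝ} {M : ℝ} (hu : ∀ s i, |u s i| ≤ M)
    (hv : ∀ s j, |v s j| ≤ M) {t : ℕ} (ht : 1 ≤ t) :
    ‖runningMean (fun s => vecMulVec (u s) (v s)) t -
        runningMean (fun s => vecMulVec (u s) (v s)) (t + 1)‖ ≤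
      2 * (√(Fintype.card m * Fintype.card n) * M ^ 2) / t := by
  refine norm_runningMean_sub_succ_le (fun s => frobenius_norm_le_of_abs_le (sq_nonneg M)
    fun i j => ?_) ht
  rw [vecMulVec_apply, abs_mul, sq]
  exact mul_le_mul (hu s i) (hv s j) (abs_nonneg _) ((abs_nonneg _).trans (hu s i))

/-- Asymptotic variations of the dictionary iterates: if `D_t` minimizes the surrogate
`f̂_t(D) = (1/t)((1/2)Tr(DᵀD A_t) − Tr(Dᵀ B_t))` over the constraint set, `(1/t)A_t`
has smallest eigenvalue `≥ κ₁ > 0`, and the data `x_i` and coefficients `α_i` are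
uniformly bounded, then `‖D_{t+1} − D_t‖_F = O(1/t)`. -/
theorem dictionary_iterates_variation (m k : ℕ)
    (x : ℕ → Fin m → ℝ) (α : ℕ → Fin k → ℝ)
    (M : ℝ) (hbound : ∀ i : ℕ, (∀ p, |x i p| ≤ M) ∧ (∀ j, |α i j| ≤ M))
    (A : ℕ → Matrix (Fin k) (Fin k) ℝ)
    (hA : ∀ t j j', A t j j' = ∑ i ∈ Finset.Icc 1 t, α i j * α i j')
    (B : ℕ → Matrix (Fin m) (Fin k) ℝ)
    (hB : ∀ t p j, B t p j = ∑ i ∈ Finset.Icc 1 t, x i p * α i j)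
    (fhat : ℕ → Matrix (Fin m) (Fin k) ℝ → ℝ)
    (hfhat : ∀ t D, fhat t D =
        (1 / (t : ℝ)) * ((1/2) * Matrix.trace (Dᵀ * D * A t) - Matrix.trace (Dᵀ * B t)))
    (C : Set (Matrix (Fin m) (Fin k) ℝ))
    (hC : C = {D | ∀ j : Fin k, ∑ i, (D i j)^2 ≤ 1})
    (Dseq : ℕ → Matrix (Fin m) (Fin k) ℝ)
    (hDmin : ∀ t : ℕ, 1 ≤ t → Dseq t ∈ C ∧ ∀ E ∈ C, fhat t (Dseq t) ≤ fhat t E)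
    (κ₁ : ℝ) (hκ₁ : 0 < κ₁)
    (heig : ∀ t : ℕ, 1 ≤ t → ∀ v : Fin k → ℝ,
        ∑ j, ∑ j', v j * A t j j' * v j' ≥ (t : ℝ) * κ₁ * ∑ j, (v j)^2) :
    ∃ c : ℝ, ∀ t : ℕ, 1 ≤ t →
      Real.sqrt (∑ i, ∑ j, (Dseq (t+1) i j - Dseq t i j)^2) ≤ c / (t : ℝ) := by
  have hAmean : ∀ t : ℕ, (t : ℝ)⁻¹ • A t = runningMean (fun i => vecMulVec (α i) (α i)) t :=
    fun t => by ext; simp [runningMean, hA, Matrix.sum_apply, vecMulVec_apply]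
  have hBmean : ∀ t : ℕ, (t : ℝ)⁻¹ • B t = runningMean (fun i => vecMulVec (x i) (α i)) t :=
    fun t => by ext; simp [runningMean, hB, Matrix.sum_apply, vecMulVec_apply]
  have hfhat_eq : ∀ t : ℕ, fhat t = surrogate ((t : ℝ)⁻¹ • A t) ((t : ℝ)⁻¹ • B t) :=
    fun t => funext fun D => by rw [hfhat, surrogate_smul, surrogate, one_div]
  have hCnorm : ∀ D ∈ C, ‖D‖ ≤ √k := fun D hD => by
    simpa using Matrix.frobenius_norm_le_sqrt_card_s10 (X := D) (by rwa [hC] at hD)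
  refine ⟨4 / κ₁ * (√k * (2 * (k * M ^ 2)) + 2 * (√(m * k) * M ^ 2)), fun t ht => ?_⟩
  obtain ⟨hDC, hDmin_t⟩ := hDmin t ht
  obtain ⟨hD'C, hD'min⟩ := hDmin (t + 1) (by omega)
  have hstrong (H : Matrix (Fin m) (Fin k) ℝ) :
      κ₁ * ‖H‖ ^ 2 ≤ trace (Hᵀ * H * ((t : ℝ)⁻¹ • A t)) := by
    have := Matrix.mul_sq_frobenius_norm_le_trace (heig t ht) H
    rw [Matrix.mul_smul, trace_smul, smul_eq_mul, inv_mul_eq_div, le_div_iff₀ (by positivity)]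
    linarith
  have hvar := norm_sub_le_of_isMinOn_surrogate _ _ (hC ▸ Matrix.convex_setOf_sum_sq_le_one)
    hCnorm hDC hD'C (hfhat_eq t ▸ isMinOn_iff.2 hDmin_t)
    (hfhat_eq (t + 1) ▸ isMinOn_iff.2 hD'min) hκ₁ hstrong
  have hΔA := Matrix.frobenius_norm_runningMean_vecMulVec_sub_succ_le
    (fun s j => (hbound s).2 j) (fun s j => (hbound s).2 j) ht
  have hΔB := Matrix.frobenius_norm_runningMean_vecMulVec_sub_succ_le
    (fun s p => (hbound s).1 p) (fun s j => (hbound s).2 j) ht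
  rw [← hAmean, ← hAmean] at hΔA
  rw [← hBmean, ← hBmean] at hΔB
  simp only [Fintype.card_fin, Real.sqrt_mul_self (Nat.cast_nonneg k)] at hΔA hΔB
  calc √(∑ i, ∑ j, (Dseq (t + 1) i j - Dseq t i j) ^ 2) = ‖Dseq (t + 1) - Dseq t‖ :=
        (Matrix.frobenius_norm_eq_sqrt_s10 _).symm
    _ ≤ _ := hvar
    _ ≤ (√k * (2 * (k * M ^ 2) / t) + 2 * (√(m * k) * M ^ 2) / t) / (κ₁ / 4) := by gcongr
    _ = _ := by field_simp
end

section
/- Let u ∈ ℝ^m minimize (1/2)‖b − u‖₂² + γ₁‖u‖₁ + γ₂∑_{i=2}^m |u[i] − u[i−1]| + (γ₃/2)‖u‖₂² with γ₃ ≥ 0. Then u = (1/(1+γ₃)) u₀, where u₀ is the minimizer of the same objective with γ₃ = 0 (and b, γ₁, γ₂ unchanged). -/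
open Finset

/-- The fused lasso (total variation) penalty `FL(u) = ∑_{i=2}^m |u[i] − u[i−1]|`. -/
noncomputable def fusedLassoPenalty {m : ℕ} (u : Fin m → ℝ) : ℝ :=
  ∑ i : Fin m, if h : (i : ℕ) + 1 < m then |u ⟨(i : ℕ) + 1, h⟩ - u i| else 0

lemma FL_smul {m : ℕ} (t : ℝ) (ht : 0 ≤ t) (v : Fin m → ℝ) :
    fusedLassoPenalty (fun i => t * v i) = t * fusedLassoPenalty v := by
  unfold fusedLassoPenalty
  rw [Finset.mul_sum]
  refine Finset.sum_congr rfl fun i _ => ?_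
  split_ifs with h
  · rw [← mul_sub, abs_mul, abs_of_nonneg ht]
  · ring

lemma FL_mid {m : ℕ} (w z : Fin m → ℝ) :
    fusedLassoPenalty (fun i => (w i + z i) / 2) ≤
      (1/2) * fusedLassoPenalty w + (1/2) * fusedLassoPenalty z := by
  unfold fusedLassoPenalty
  rw [Finset.mul_sum, Finset.mul_sum, ← Finset.sum_add_distrib]
  refine Finset.sum_le_sum fun i _ => ?_
  split_ifs with h
  · have he : (w ⟨(i:ℕ)+1, h⟩ + z ⟨(i:ℕ)+1, h⟩) / 2 - (w i + z i) / 2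
        = (1/2) * (w ⟨(i:ℕ)+1, h⟩ - w i) + (1/2) * (z ⟨(i:ℕ)+1, h⟩ - z i) := by ring
    rw [he]
    calc |(1/2) * (w ⟨(i:ℕ)+1, h⟩ - w i) + (1/2) * (z ⟨(i:ℕ)+1, h⟩ - z i)|
        ≤ |(1/2) * (w ⟨(i:ℕ)+1, h⟩ - w i)| + |(1/2) * (z ⟨(i:ℕ)+1, h⟩ - z i)| := abs_add_le _ _
      _ = (1/2) * |w ⟨(i:ℕ)+1, h⟩ - w i| + (1/2) * |z ⟨(i:ℕ)+1, h⟩ - z i| := by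
          rw [abs_mul, abs_mul, show |(1:ℝ)/2| = 1/2 from abs_of_pos (by norm_num)]
  · norm_num

/-- Scaling property for the fused lasso signal approximation: the minimizer with the
extra ridge term `(γ₃/2)‖u‖₂²` equals `1/(1+γ₃)` times the minimizer without it. -/
theorem fused_lasso_ridge_scaling (m : ℕ) (b : Fin m → ℝ)
    (γ₁ γ₂ γ₃ : ℝ) (hγ₁ : 0 ≤ γ₁) (hγ₂ : 0 ≤ γ₂) (hγ₃ : 0 ≤ γ₃)
    (u u₀ : Fin m → ℝ)
    (hu : ∀ v : Fin m → ℝ,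
        (1/2) * (∑ i, (b i - u i)^2) + γ₁ * (∑ i, |u i|) + γ₂ * fusedLassoPenalty u +
            (γ₃ / 2) * (∑ i, (u i)^2) ≤
        (1/2) * (∑ i, (b i - v i)^2) + γ₁ * (∑ i, |v i|) + γ₂ * fusedLassoPenalty v +
            (γ₃ / 2) * (∑ i, (v i)^2))
    (hu₀ : ∀ v : Fin m → ℝ,
        (1/2) * (∑ i, (b i - u₀ i)^2) + γ₁ * (∑ i, |u₀ i|) + γ₂ * fusedLassoPenalty u₀ ≤
        (1/2) * (∑ i, (b i - v i)^2) + γ₁ * (∑ i, |v i|) + γ₂ * fusedLassoPenalty v) :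
    u = fun i => u₀ i / (1 + γ₃) := by
  set c : ℝ := 1 + γ₃ with hc_def
  have hc : 0 < c := by positivity
  have hcne : c ≠ 0 := ne_of_gt hc
  -- Key identity: objective with ridge, at v/c, equals (1/c) * plain objective at v + const
  have key : ∀ v : Fin m → ℝ,
      (1/2) * (∑ i, (b i - v i / c)^2) + γ₁ * (∑ i, |v i / c|) +
        γ₂ * fusedLassoPenalty (fun i => v i / c) + (γ₃ / 2) * (∑ i, (v i / c)^2)
      = (1/c) * ((1/2) * (∑ i, (b i - v i)^2) + γ₁ * (∑ i, |v i|) +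
          γ₂ * fusedLassoPenalty v) + (1/2) * (1 - 1/c) * (∑ i, (b i)^2) := by
    intro v
    have hFL : fusedLassoPenalty (fun i => v i / c) = c⁻¹ * fusedLassoPenalty v := by
      have : (fun i => v i / c) = fun i => c⁻¹ * v i := by funext i; rw [div_eq_inv_mul]
      rw [this, FL_smul c⁻¹ (by positivity) v]
    have habs : (∑ i, |v i / c|) = c⁻¹ * ∑ i, |v i| := by
      rw [Finset.mul_sum]
      refine Finset.sum_congr rfl fun i _ => ?_
      rw [abs_div, abs_of_pos hc, div_eq_inv_mul]
    have hq : (1/2) * (∑ i, (b i - v i / c)^2) + (γ₃ / 2) * (∑ i, (v i / c)^2)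
        = (1/c) * ((1/2) * (∑ i, (b i - v i)^2)) + (1/2) * (1 - 1/c) * (∑ i, (b i)^2) := by
      have hp : ∀ i : Fin m, (1/2) * (b i - v i / c)^2 + (γ₃ / 2) * (v i / c)^2
          = (1/c) * ((1/2) * (b i - v i)^2) + (1/2) * (1 - 1/c) * (b i)^2 := by
        intro i
        have : γ₃ = c - 1 := by rw [hc_def]; ring
        rw [this]
        field_simp
        ring
      calc (1/2) * (∑ i, (b i - v i / c)^2) + (γ₃ / 2) * (∑ i, (v i / c)^2)
          = ∑ i, ((1/2) * (b i - v i / c)^2 + (γ₃ / 2) * (v i / c)^2) := by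
            rw [Finset.sum_add_distrib, ← Finset.mul_sum, ← Finset.mul_sum]
        _ = ∑ i, ((1/c) * ((1/2) * (b i - v i)^2) + (1/2) * (1 - 1/c) * (b i)^2) :=
            Finset.sum_congr rfl fun i _ => hp i
        _ = (1/c) * ((1/2) * (∑ i, (b i - v i)^2)) + (1/2) * (1 - 1/c) * (∑ i, (b i)^2) := by
            simp only [Finset.sum_add_distrib, ← Finset.mul_sum]
    rw [hFL, habs]
    linear_combination hq
  set w : Fin m → ℝ := fun i => c * u i with hw_def
  have hu_eq : u = fun i => w i / c := by
    funext i; rw [hw_def]; field_simp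
  -- Step 1: G w ≤ G u₀
  have step1 : (1/2) * (∑ i, (b i - w i)^2) + γ₁ * (∑ i, |w i|) + γ₂ * fusedLassoPenalty w
      ≤ (1/2) * (∑ i, (b i - u₀ i)^2) + γ₁ * (∑ i, |u₀ i|) + γ₂ * fusedLassoPenalty u₀ := by
    have h := hu (fun i => u₀ i / c)
    rw [hu_eq] at h
    have h1 := key w
    have h2 := key u₀
    have hpos : (0:ℝ) < 1/c := by positivity
    rw [h1, h2] at h
    exact le_of_mul_le_mul_left (le_of_add_le_add_right h) hpos
  -- Step 2: midpoint argument
  set z : Fin m → ℝ := fun i => (w i + u₀ i) / 2 with hz_def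
  have hq : (∑ i, (b i - z i)^2)
      = (1/2) * (∑ i, (b i - w i)^2) + (1/2) * (∑ i, (b i - u₀ i)^2)
        - (1/4) * (∑ i, (w i - u₀ i)^2) := by
    have hp : ∀ i : Fin m, (b i - z i)^2
        = (1/2) * (b i - w i)^2 + (1/2) * (b i - u₀ i)^2 - (1/4) * (w i - u₀ i)^2 := by
      intro i; rw [hz_def]; ring
    calc (∑ i, (b i - z i)^2)
        = ∑ i, ((1/2) * (b i - w i)^2 + (1/2) * (b i - u₀ i)^2 - (1/4) * (w i - u₀ i)^2) :=
          Finset.sum_congr rfl fun i _ => hp i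
      _ = _ := by
          rw [Finset.sum_sub_distrib, Finset.sum_add_distrib, ← Finset.mul_sum,
            ← Finset.mul_sum, ← Finset.mul_sum]
  have habs : (∑ i, |z i|) ≤ (1/2) * (∑ i, |w i|) + (1/2) * (∑ i, |u₀ i|) := by
    rw [Finset.mul_sum, Finset.mul_sum, ← Finset.sum_add_distrib]
    refine Finset.sum_le_sum fun i _ => ?_
    rw [hz_def]
    calc |(w i + u₀ i) / 2| ≤ (|w i| + |u₀ i|) / 2 := by
          rw [abs_div, abs_of_pos (by norm_num : (0:ℝ) < 2)]
          exact div_le_div_of_nonneg_right (abs_add_le _ _) (by norm_num)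
      _ = (1/2) * |w i| + (1/2) * |u₀ i| := by ring
  have hFLmid : fusedLassoPenalty z
      ≤ (1/2) * fusedLassoPenalty w + (1/2) * fusedLassoPenalty u₀ := by
    have : z = fun i => (w i + u₀ i) / 2 := hz_def
    rw [this]
    exact FL_mid w u₀
  have hGz := hu₀ z
  have habs' : γ₁ * (∑ i, |z i|) ≤ (1/2) * (γ₁ * ∑ i, |w i|) + (1/2) * (γ₁ * ∑ i, |u₀ i|) :=
    calc γ₁ * (∑ i, |z i|) ≤ γ₁ * ((1/2) * (∑ i, |w i|) + (1/2) * (∑ i, |u₀ i|)) :=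
          mul_le_mul_of_nonneg_left habs hγ₁
      _ = (1/2) * (γ₁ * ∑ i, |w i|) + (1/2) * (γ₁ * ∑ i, |u₀ i|) := by ring
  have hFL' : γ₂ * fusedLassoPenalty z
      ≤ (1/2) * (γ₂ * fusedLassoPenalty w) + (1/2) * (γ₂ * fusedLassoPenalty u₀) :=
    calc γ₂ * fusedLassoPenalty z
        ≤ γ₂ * ((1/2) * fusedLassoPenalty w + (1/2) * fusedLassoPenalty u₀) :=
          mul_le_mul_of_nonneg_left hFLmid hγ₂
      _ = _ := by ring
  have hsum0 : (∑ i, (w i - u₀ i)^2) ≤ 0 := by linarith [step1, hGz, hq, habs', hFL']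
  have hall : ∀ j ∈ Finset.univ, (w j - u₀ j)^2 = 0 :=
    (Finset.sum_eq_zero_iff_of_nonneg (fun j _ => sq_nonneg (w j - u₀ j))).mp
      (le_antisymm hsum0 (Finset.sum_nonneg fun j _ => sq_nonneg _))
  funext i
  have h0 := hall i (Finset.mem_univ i)
  have h1 : w i - u₀ i = 0 := by
    exact pow_eq_zero_iff (n := 2) (by norm_num) |>.mp h0
  have h2 : c * u i = u₀ i := by
    have : w i = u₀ i := by linarith
    simpa [hw_def] using this
  rw [eq_div_iff hcne]
  linear_combination h2
end

section
/- Let u★(γ₁) denote the minimizer of (1/2)‖b − u‖₂² + γ₁‖u‖₁ + γ₂ FL(u). Then for every i, u★(γ₁)[i] = sign(u★(0)[i])·max(|u★(0)[i]| − γ₁, 0); that is, the solution with ℓ¹ penalty is obtained by soft-thresholding the solution without ℓ¹ penalty. -/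
/-!
Write `w` for the soft-thresholded `u₀`. For convex `g`, `u` minimizes `½‖b - ·‖² + g` exactly
when `b - u` is a subgradient of `g` at `u`; so `b - u₀ ∈ ∂(γ₂ FL)(u₀)`, and by strong convexity
it suffices to show `b - w ∈ ∂(γ₁ ‖·‖₁ + γ₂ FL)(w)`. Split `b - w = (u₀ - w) + (b - u₀)`. The
first summand is a subgradient of `γ₁ ‖·‖₁` at `w`, soft thresholding being the proximal map of
`γ₁ |·|`. For the second, summation by parts writes `⟪b - u₀, v⟫ = ∑ₖ tₖ (v[k+1] - v[k])`, where
the partial sums `tₖ` of `u₀ - b` are subgradients of `γ₂ |·|` at the jumps `u₀[k+1] - u₀[k]`.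
Soft thresholding is monotone, so it never reverses the sign of a jump, and each `tₖ` is still a
subgradient of `γ₂ |·|` at the corresponding jump of `w`.
-/

open Finset

open Filter Topology

noncomputable def softThreshold (γ x : ℝ) : ℝ := Real.sign x * max (|x| - γ) 0

section SoftThreshold

variable {γ : ℝ}

theorem softThreshold_cases (hγ : 0 ≤ γ) (x : ℝ) :
    (γ < x ∧ softThreshold γ x = x - γ) ∨ (x < -γ ∧ softThreshold γ x = x + γ) ∨
      (|x| ≤ γ ∧ softThreshold γ x = 0) := by
  rcases lt_or_ge γ x with hx | hx
  · left
    refine ⟨hx, ?_⟩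
    rw [softThreshold, Real.sign_of_pos (by linarith), abs_of_pos (by linarith),
      max_eq_left (by linarith), one_mul]
  rcases lt_or_ge x (-γ) with hx' | hx'
  · right; left
    refine ⟨hx', ?_⟩
    rw [softThreshold, Real.sign_of_neg (by linarith), abs_of_neg (by linarith),
      max_eq_left (by linarith)]
    ring
  · right; right
    have habs : |x| ≤ γ := abs_le.2 ⟨hx', hx⟩
    exact ⟨habs, by rw [softThreshold, max_eq_right (by linarith), mul_zero]⟩

theorem softThreshold_eq_max_add_min (hγ : 0 ≤ γ) (x : ℝ) :
    softThreshold γ x = max (x - γ) 0 + min (x + γ) 0 := by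
  rcases softThreshold_cases hγ x with ⟨hx, hs⟩ | ⟨hx, hs⟩ | ⟨hx, hs⟩ <;> rw [hs]
  · rw [max_eq_left (by linarith), min_eq_right (by linarith), add_zero]
  · rw [max_eq_right (by linarith), min_eq_left (by linarith), zero_add]
  · rw [abs_le] at hx
    rw [max_eq_right (by linarith), min_eq_right (by linarith), add_zero]

theorem monotone_softThreshold (hγ : 0 ≤ γ) : Monotone (softThreshold γ) := by
  intro a b hab
  rw [softThreshold_eq_max_add_min hγ, softThreshold_eq_max_add_min hγ]
  gcongr

theorem abs_subgradient_softThreshold (hγ : 0 ≤ γ) (x y : ℝ) :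
    γ * |softThreshold γ x| + (x - softThreshold γ x) * (y - softThreshold γ x) ≤ γ * |y| := by
  rcases softThreshold_cases hγ x with ⟨hx, hs⟩ | ⟨hx, hs⟩ | ⟨hx, hs⟩ <;> rw [hs]
  · rw [abs_of_pos (by linarith)]
    nlinarith [mul_le_mul_of_nonneg_left (le_abs_self y) hγ]
  · rw [abs_of_neg (by linarith)]
    nlinarith [mul_le_mul_of_nonneg_left (neg_abs_le y) hγ]
  · calc γ * |0| + (x - 0) * (y - 0) = x * y := by simp
      _ ≤ |x| * |y| := by rw [← abs_mul]; exact le_abs_self _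
      _ ≤ γ * |y| := mul_le_mul_of_nonneg_right hx (abs_nonneg y)

end SoftThreshold

section Prox

variable {ι : Type*} [Fintype ι]

def IsSubgradient (g : (ι → ℝ) → ℝ) (s x : ι → ℝ) : Prop :=
  ∀ v, g x + s ⬝ᵥ (v - x) ≤ g v

def IsProx (g : (ι → ℝ) → ℝ) (b u : ι → ℝ) : Prop :=
  ∀ v, (1 / 2) * ∑ i, (b i - u i) ^ 2 + g u ≤ (1 / 2) * ∑ i, (b i - v i) ^ 2 + g v

theorem IsSubgradient.add {g₁ g₂ : (ι → ℝ) → ℝ} {s₁ s₂ x : ι → ℝ} (h₁ : IsSubgradient g₁ s₁ x)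
    (h₂ : IsSubgradient g₂ s₂ x) : IsSubgradient (fun v => g₁ v + g₂ v) (s₁ + s₂) x := by
  intro v
  have := add_le_add (h₁ v) (h₂ v)
  rw [add_dotProduct]
  linarith

theorem half_sum_sq_sub_eq (b u v : ι → ℝ) :
    (1 / 2) * ∑ i, (b i - v i) ^ 2 =
      (1 / 2) * ∑ i, (b i - u i) ^ 2 - (b - u) ⬝ᵥ (v - u) + (1 / 2) * ∑ i, (v i - u i) ^ 2 := by
  simp only [dotProduct, Pi.sub_apply, mul_sum, ← sum_sub_distrib, ← sum_add_distrib]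
  exact sum_congr rfl fun i _ => by ring

theorem IsProx.isSubgradient {g : (ι → ℝ) → ℝ} {b u : ι → ℝ} (hg : ConvexOn ℝ Set.univ g)
    (h : IsProx g b u) : IsSubgradient g (b - u) u := by
  intro v
  set q := (1 / 2) * ∑ i, (v i - u i) ^ 2
  have hstep : ∀ t ∈ Set.Ioo (0 : ℝ) 1, g u + (b - u) ⬝ᵥ (v - u) ≤ g v + t * q := by
    rintro t ⟨ht₀, ht₁⟩
    have hconv := hg.2 (Set.mem_univ u) (Set.mem_univ v) (by linarith : 0 ≤ 1 - t) ht₀.le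
      (by ring)
    have hmin := h ((1 - t) • u + t • v)
    have hdir : (1 - t) • u + t • v - u = t • (v - u) := by module
    have hquad : ∑ i, (((1 - t) • u + t • v) i - u i) ^ 2 = t ^ 2 * ∑ i, (v i - u i) ^ 2 := by
      rw [mul_sum]
      exact sum_congr rfl fun i _ => by simp only [Pi.add_apply, Pi.smul_apply, smul_eq_mul]; ring
    rw [half_sum_sq_sub_eq b u ((1 - t) • u + t • v), hdir, dotProduct_smul, smul_eq_mul,
      hquad] at hmin
    rw [smul_eq_mul, smul_eq_mul] at hconv
    refine le_of_mul_le_mul_left ?_ ht₀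
    linear_combination hmin + hconv
  have hlim : Tendsto (fun t => g v + t * q) (𝓝[>] 0) (𝓝 (g v)) := by
    have : Tendsto (fun t => g v + t * q) (𝓝 0) (𝓝 (g v + 0 * q)) :=
      (continuous_const.add (continuous_id.mul continuous_const)).tendsto 0
    simpa using this.mono_left nhdsWithin_le_nhds
  exact ge_of_tendsto hlim (eventually_of_mem (Ioo_mem_nhdsGT one_pos) hstep)

theorem IsProx.eq_of_isSubgradient {g : (ι → ℝ) → ℝ} {b u w : ι → ℝ} (h : IsProx g b u)
    (hw : IsSubgradient g (b - w) w) : u = w := by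
  have hsq : ∑ i, (u i - w i) ^ 2 ≤ 0 := by
    have := half_sum_sq_sub_eq b w u
    linarith [h w, hw u]
  funext i
  have := (sum_eq_zero_iff_of_nonneg fun j _ => sq_nonneg (u j - w j)).1
    (le_antisymm hsq (sum_nonneg fun j _ => sq_nonneg _)) i (mem_univ i)
  exact sub_eq_zero.1 (pow_eq_zero_iff two_ne_zero |>.1 this)

theorem isSubgradient_sum_abs_softThreshold {γ : ℝ} (hγ : 0 ≤ γ) (x : ι → ℝ) :
    IsSubgradient (fun v => γ * ∑ i, |v i|) (x - softThreshold γ ∘ x) (softThreshold γ ∘ x) := by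
  intro v
  simp only [dotProduct, Pi.sub_apply, Function.comp_apply, mul_sum, ← sum_add_distrib]
  exact sum_le_sum fun i _ => abs_subgradient_softThreshold hγ (x i) (v i)

end Prox

theorem Monotone.exists_nonneg_mul_sub {φ : ℝ → ℝ} (hφ : Monotone φ) (a a' : ℝ) :
    ∃ c, 0 ≤ c ∧ φ a' - φ a = c * (a' - a) := by
  rcases eq_or_ne a' a with rfl | hne
  · exact ⟨0, le_rfl, by simp⟩
  refine ⟨(φ a' - φ a) / (a' - a), ?_, by field_simp [sub_ne_zero.2 hne]⟩
  rcases hne.lt_or_gt with h | h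
  · exact div_nonneg_of_nonpos (sub_nonpos.2 (hφ h.le)) (sub_nonpos.2 h.le)
  · exact div_nonneg (sub_nonneg.2 (hφ h.le)) (sub_nonneg.2 h.le)

theorem abs_subgradient_nonneg_mul {γ s d c : ℝ} (hγ : 0 ≤ γ) (hc : 0 ≤ c)
    (h : ∀ e, γ * |d| + s * (e - d) ≤ γ * |e|) (e : ℝ) :
    γ * |c * d| + s * (e - c * d) ≤ γ * |e| := by
  have h₀ := h 0
  have h₂ := h (2 * d)
  rw [abs_zero] at h₀
  rw [abs_mul, abs_two] at h₂
  have hsd : s * d = γ * |d| := by linarith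
  have hse : s * e ≤ γ * |e| := by
    have := h (e + d)
    nlinarith [mul_le_mul_of_nonneg_left (abs_add_le e d) hγ]
  rw [abs_mul, abs_of_nonneg hc]
  linear_combination hse - c * hsd

theorem sum_range_mul_eq_sum_partial_sum_mul_sub {R : Type*} [CommRing R] {m : ℕ} {P : ℕ → R}
    (hP : ∑ j ∈ range m, P j = 0) (Y : ℕ → R) :
    ∑ j ∈ range m, P j * Y j =
      ∑ k ∈ range (m - 1), (-∑ j ∈ range (k + 1), P j) * (Y (k + 1) - Y k) := by
  calc ∑ j ∈ range m, P j * Y j = ∑ j ∈ range m, Y j • P j :=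
        sum_congr rfl fun j _ => by rw [smul_eq_mul, mul_comm]
    _ = _ := by
      rw [sum_range_by_parts, hP, smul_zero, zero_sub, ← sum_neg_distrib]
      exact sum_congr rfl fun k _ => by rw [smul_eq_mul]; ring

theorem Fin.exists_eq_comp_val {α : Type*} [Inhabited α] {m : ℕ} (x : Fin m → α) :
    ∃ X : ℕ → α, x = fun i : Fin m => X i :=
  ⟨Function.extend Fin.val x default,
    funext fun i => (Fin.val_injective.extend_apply x default i).symm⟩

section FusedLasso

variable {m : ℕ}

theorem convexOn_fusedLassoPenalty : ConvexOn ℝ Set.univ (fusedLassoPenalty (m := m)) := by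
  refine ⟨convex_univ, fun x _ y _ a b ha hb _ => ?_⟩
  simp only [fusedLassoPenalty, smul_eq_mul, mul_sum, ← sum_add_distrib]
  refine sum_le_sum fun i _ => ?_
  split_ifs with h
  · calc |(a • x + b • y) ⟨i + 1, h⟩ - (a • x + b • y) i|
        = |a * (x ⟨i + 1, h⟩ - x i) + b * (y ⟨i + 1, h⟩ - y i)| := by
          simp only [Pi.add_apply, Pi.smul_apply, smul_eq_mul]; ring_nf
      _ ≤ a * |x ⟨i + 1, h⟩ - x i| + b * |y ⟨i + 1, h⟩ - y i| := by
          refine (abs_add_le _ _).trans ?_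
          rw [abs_mul, abs_mul, abs_of_nonneg ha, abs_of_nonneg hb]
  · simp

theorem fusedLassoPenalty_add_const (x : Fin m → ℝ) (c : ℝ) :
    fusedLassoPenalty (fun i => x i + c) = fusedLassoPenalty x := by
  simp only [fusedLassoPenalty, add_sub_add_right_eq_sub]

theorem fusedLassoPenalty_eq_sum_range (X : ℕ → ℝ) :
    fusedLassoPenalty (fun i : Fin m => X i) = ∑ k ∈ range (m - 1), |X (k + 1) - X k| := by
  simp only [fusedLassoPenalty, dite_eq_ite]
  rw [Fin.sum_univ_eq_sum_range (fun k => if k + 1 < m then |X (k + 1) - X k| else 0)]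
  rcases m with _ | n
  · simp
  · rw [sum_range_succ, if_neg (by omega), add_zero, Nat.add_sub_cancel]
    exact sum_congr rfl fun k hk => if_pos (by simpa using hk)

theorem IsSubgradient.sum_eq_zero_of_fusedLasso {γ : ℝ} {p x : Fin m → ℝ}
    (h : IsSubgradient (fun v => γ * fusedLassoPenalty v) p x) : ∑ i, p i = 0 := by
  have key : ∀ c, c * ∑ i, p i ≤ 0 := fun c => by
    have := h (fun i => x i + c)
    simp only [fusedLassoPenalty_add_const, dotProduct, Pi.sub_apply, add_sub_cancel_left] at this
    rw [mul_sum]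
    simpa [mul_comm] using this
  linarith [key 1, key (-1)]

theorem IsSubgradient.abs_subgradient_partial_sum_of_fusedLasso {γ : ℝ} {P X : ℕ → ℝ}
    (h : IsSubgradient (fun v => γ * fusedLassoPenalty v) (fun i : Fin m => P i) (fun i => X i))
    {k : ℕ} (hk : k + 1 < m) (e : ℝ) :
    γ * |X (k + 1) - X k| + (-∑ j ∈ range (k + 1), P j) * (e - (X (k + 1) - X k)) ≤ γ * |e| := by
  set c := X (k + 1) - X k - e
  -- shifting `X` by `c` on `0, …, k` changes the jump at `k` to `e` and leaves the others
  set V : ℕ → ℝ := fun j => X j + if j ≤ k then c else 0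
  have hinner : (fun i : Fin m => P i) ⬝ᵥ ((fun i : Fin m => V i) - fun i : Fin m => X i) =
      c * ∑ j ∈ range (k + 1), P j := by
    simp only [dotProduct, Pi.sub_apply, V, add_sub_cancel_left]
    rw [Fin.sum_univ_eq_sum_range (fun j => P j * if j ≤ k then c else 0),
      ← sum_range_add_sum_Ico _ hk.le, mul_sum,
      sum_eq_zero (s := Ico (k + 1) m) fun j hj => by
        rw [if_neg (by simp at hj; omega), mul_zero], add_zero]
    exact sum_congr rfl fun j hj => by rw [if_pos (by simp at hj; omega), mul_comm]
  have hk' : k ∈ range (m - 1) := mem_range.2 (by omega)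
  have hpen : ∑ i ∈ range (m - 1), |V (i + 1) - V i| =
      ∑ i ∈ range (m - 1), |X (i + 1) - X i| - |X (k + 1) - X k| + |e| := by
    rw [← add_sum_erase _ _ hk', ← add_sum_erase _ _ hk']
    have hedge : V (k + 1) - V k = e := by simp only [V, c]; split_ifs <;> first | omega | ring
    have hrest : ∀ i ∈ (range (m - 1)).erase k, V (i + 1) - V i = X (i + 1) - X i := by
      intro i hi
      have := ne_of_mem_erase hi
      simp only [V]; split_ifs <;> first | omega | ring
    rw [hedge, sum_congr rfl fun i hi => by rw [hrest i hi]]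
    ring
  have := h (fun i => V i)
  simp only [fusedLassoPenalty_eq_sum_range, hinner, hpen] at this
  linear_combination this

theorem IsSubgradient.comp_monotone_of_fusedLasso {γ : ℝ} (hγ : 0 ≤ γ) {φ : ℝ → ℝ}
    (hφ : Monotone φ) {p x : Fin m → ℝ}
    (h : IsSubgradient (fun v => γ * fusedLassoPenalty v) p x) :
    IsSubgradient (fun v => γ * fusedLassoPenalty v) p (φ ∘ x) := by
  have hsum := h.sum_eq_zero_of_fusedLasso
  obtain ⟨P, rfl⟩ := Fin.exists_eq_comp_val p
  obtain ⟨X, rfl⟩ := Fin.exists_eq_comp_val x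
  intro v
  obtain ⟨V, rfl⟩ := Fin.exists_eq_comp_val v
  rw [Fin.sum_univ_eq_sum_range P] at hsum
  have hdot : (fun i : Fin m => P i) ⬝ᵥ ((fun i : Fin m => V i) - fun i : Fin m => φ (X i)) =
      ∑ k ∈ range (m - 1), (-∑ j ∈ range (k + 1), P j) *
        ((V (k + 1) - V k) - (φ (X (k + 1)) - φ (X k))) := by
    simp only [dotProduct, Pi.sub_apply]
    rw [Fin.sum_univ_eq_sum_range (fun j => P j * (V j - φ (X j))),
      sum_range_mul_eq_sum_partial_sum_mul_sub hsum]
    exact sum_congr rfl fun k _ => by ring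
  simp only [Function.comp_def]
  rw [hdot, fusedLassoPenalty_eq_sum_range (fun n => φ (X n)), fusedLassoPenalty_eq_sum_range,
    mul_sum, mul_sum, ← sum_add_distrib]
  refine sum_le_sum fun k hk => ?_
  obtain ⟨c, hc, hφc⟩ := hφ.exists_nonneg_mul_sub (X k) (X (k + 1))
  rw [hφc]
  exact abs_subgradient_nonneg_mul hγ hc
    (h.abs_subgradient_partial_sum_of_fusedLasso (by simp at hk; omega)) _

end FusedLasso

/-- Soft-thresholding property of the fused lasso signal approximation: the minimizer
with `ℓ¹` penalty `γ₁` is obtained by componentwise soft-thresholding (at level `γ₁`)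
of the minimizer without `ℓ¹` penalty. -/
theorem fused_lasso_soft_thresholding (m : ℕ) (b : Fin m → ℝ)
    (γ₁ γ₂ : ℝ) (hγ₁ : 0 ≤ γ₁) (hγ₂ : 0 ≤ γ₂)
    (u u₀ : Fin m → ℝ)
    (hu : ∀ v : Fin m → ℝ,
        (1/2) * (∑ i, (b i - u i)^2) + γ₁ * (∑ i, |u i|) + γ₂ * fusedLassoPenalty u ≤
        (1/2) * (∑ i, (b i - v i)^2) + γ₁ * (∑ i, |v i|) + γ₂ * fusedLassoPenalty v)
    (hu₀ : ∀ v : Fin m → ℝ,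
        (1/2) * (∑ i, (b i - u₀ i)^2) + γ₂ * fusedLassoPenalty u₀ ≤
        (1/2) * (∑ i, (b i - v i)^2) + γ₂ * fusedLassoPenalty v) :
    ∀ i : Fin m, u i = Real.sign (u₀ i) * max (|u₀ i| - γ₁) 0 := by
  have hprox₀ : IsProx (fun v => γ₂ * fusedLassoPenalty v) b u₀ := hu₀
  have hprox : IsProx (fun v => γ₁ * ∑ i, |v i| + γ₂ * fusedLassoPenalty v) b u :=
    fun v => by linarith [hu v]
  have htv := (hprox₀.isSubgradient (convexOn_fusedLassoPenalty.smul hγ₂))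
    |>.comp_monotone_of_fusedLasso hγ₂ (monotone_softThreshold hγ₁)
  have hsub := (isSubgradient_sum_abs_softThreshold hγ₁ u₀).add htv
  rw [sub_add_sub_cancel'] at hsub
  intro i
  rw [hprox.eq_of_isSubgradient hsub]
  rfl
end

section
/- Let b ∈ ℝ^m, γ ≥ 0, τ > 0 with ‖b‖₁ + (γ/2)‖b‖₂² > τ. For λ ≥ 0 define u(λ)[j] = sign(b[j])·max(|b[j]| − λ, 0)/(1 + λγ). Then the map λ ↦ ‖u(λ)‖₁ + (γ/2)‖u(λ)‖₂² is strictly decreasing on the interval where u(λ) ≠ 0, and there is a unique λ★ > 0 with ‖u(λ★)‖₁ + (γ/2)‖u(λ★)‖₂² = τ; moreover u(λ★) is the orthogonal projection of b onto the elastic-net ball {u : ‖u‖₁ + (γ/2)‖u‖₂² ≤ τ}. -/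
open Finset

lemma en_key (β lam γ w : ℝ) (hγ : 0 ≤ γ) (hlam : 0 < lam)
    (uu : ℝ) (huu : uu = Real.sign β * max (|β| - lam) 0 / (1 + lam * γ)) :
    (1/2)*(β-uu)^2 + lam*(|uu| + γ/2*uu^2) ≤ (1/2)*(β-w)^2 + lam*(|w| + γ/2*w^2) := by
  have hd : 0 < 1 + lam * γ := by nlinarith
  rcases le_or_gt |β| lam with h | h
  · have hu0 : uu = 0 := by
      rw [huu, max_eq_right (by linarith), mul_zero, zero_div]
    have hb1 : β * w ≤ |β| * |w| := (le_abs_self _).trans (abs_mul β w).le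
    have hb2 : |β| * |w| ≤ lam * |w| := mul_le_mul_of_nonneg_right h (abs_nonneg w)
    rw [hu0]
    simp only [abs_zero]
    nlinarith [sq_nonneg w, abs_nonneg w, mul_nonneg (mul_nonneg hlam.le hγ) (sq_nonneg w)]
  · rcases lt_trichotomy β 0 with hb | hb | hb
    · have hβa : |β| = -β := abs_of_neg hb
      have hueq : uu = -((-β - lam)/(1 + lam*γ)) := by
        rw [huu, Real.sign_of_neg hb, hβa, max_eq_left (by linarith [hβa ▸ h])]
        ring
      have hneg : 0 < -β - lam := by rw [hβa] at h; linarith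
      have huneg : uu < 0 := by rw [hueq]; simp; positivity
      have hua : |uu| = -uu := abs_of_neg huneg
      have hud : uu * (1 + lam*γ) = β + lam := by rw [hueq]; field_simp; ring
      rw [hua]
      nlinarith [sq_nonneg (w-uu), mul_nonneg hlam.le (by linarith [neg_abs_le w] : (0:ℝ) ≤ |w| + w),
        mul_nonneg (mul_nonneg hlam.le hγ) (sq_nonneg (w-uu))]
    · exfalso; rw [hb] at h; simp at h; linarith
    · have hβa : |β| = β := abs_of_pos hb
      have hueq : uu = (β - lam)/(1 + lam*γ) := by
        rw [huu, Real.sign_of_pos hb, hβa, max_eq_left (by linarith [hβa ▸ h]), one_mul]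
      have hpos : 0 < β - lam := by rw [hβa] at h; linarith
      have hupos : 0 < uu := by rw [hueq]; positivity
      have hua : |uu| = uu := abs_of_pos hupos
      have hud : uu * (1 + lam*γ) = β - lam := by rw [hueq]; field_simp
      rw [hua]
      nlinarith [sq_nonneg (w-uu), mul_nonneg hlam.le (by linarith [le_abs_self w] : (0:ℝ) ≤ |w| - w),
        mul_nonneg (mul_nonneg hlam.le hγ) (sq_nonneg (w-uu))]

/-- Projection onto the elastic-net ball: with
`u(λ)[j] = sign(b[j]) max(|b[j]| − λ, 0)/(1 + λγ)`, the map
`λ ↦ ‖u(λ)‖₁ + (γ/2)‖u(λ)‖₂²` is strictly decreasing where `u(λ) ≠ 0`, there is a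
unique `λ★ > 0` where it equals `τ`, and `u(λ★)` is the orthogonal projection of `b`
onto `{u : ‖u‖₁ + (γ/2)‖u‖₂² ≤ τ}`. -/
theorem elastic_net_projection (m : ℕ) (b : Fin m → ℝ) (γ τ : ℝ)
    (hγ : 0 ≤ γ) (hτ : 0 < τ)
    (hinfeas : (∑ j, |b j|) + (γ/2) * (∑ j, (b j)^2) > τ)
    (u : ℝ → Fin m → ℝ)
    (hu : ∀ lam j, u lam j = Real.sign (b j) * max (|b j| - lam) 0 / (1 + lam * γ))
    (φ : ℝ → ℝ)
    (hφ : ∀ lam, φ lam = (∑ j, |u lam j|) + (γ/2) * (∑ j, (u lam j)^2)) :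
    StrictAntiOn φ {lam : ℝ | 0 ≤ lam ∧ u lam ≠ 0} ∧
    (∃! lamstar : ℝ, 0 < lamstar ∧ φ lamstar = τ) ∧
    (∀ lamstar : ℝ, 0 < lamstar → φ lamstar = τ →
      ∀ v : Fin m → ℝ, (∑ j, |v j|) + (γ/2) * (∑ j, (v j)^2) ≤ τ →
        ∑ j, (b j - u lamstar j)^2 ≤ ∑ j, (b j - v j)^2) := by
  set t : ℝ → Fin m → ℝ := fun lam j => max (|b j| - lam) 0 / (1 + lam * γ) with ht
  have hd : ∀ lam : ℝ, 0 ≤ lam → 0 < 1 + lam * γ := fun lam h => by nlinarith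
  have htnn : ∀ lam, 0 ≤ lam → ∀ j, 0 ≤ t lam j := fun lam h j =>
    div_nonneg (le_max_right _ _) (hd lam h).le
  have huabs : ∀ lam, 0 ≤ lam → ∀ j, |u lam j| = t lam j := by
    intro lam hl j
    rw [hu]
    rcases eq_or_ne (b j) 0 with h0 | h0
    · simp [ht, h0, max_eq_right (by linarith : -lam ≤ (0:ℝ))]
    · have hs : |Real.sign (b j)| = 1 := by
        rcases h0.lt_or_gt with h | h
        · simp [Real.sign_of_neg h]
        · simp [Real.sign_of_pos h]
      rw [abs_div, abs_mul, hs, one_mul, abs_of_nonneg (le_max_right _ _),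
        abs_of_pos (hd lam hl)]
  have husq : ∀ lam, 0 ≤ lam → ∀ j, (u lam j)^2 = (t lam j)^2 := by
    intro lam hl j; rw [← sq_abs, huabs lam hl]
  have hφt : ∀ lam, 0 ≤ lam → φ lam = (∑ j, t lam j) + (γ/2) * (∑ j, (t lam j)^2) := by
    intro lam hl
    rw [hφ]
    congr 1
    · exact Finset.sum_congr rfl fun j _ => huabs lam hl j
    · congr 1
      exact Finset.sum_congr rfl fun j _ => husq lam hl j
  have htanti : ∀ l1 l2 : ℝ, 0 ≤ l1 → l1 ≤ l2 → ∀ j, t l2 j ≤ t l1 j := by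
    intro l1 l2 h1 h12 j
    have hd1 := hd l1 h1
    have hd2 := hd l2 (h1.trans h12)
    rw [ht, div_le_div_iff₀ hd2 hd1]
    have hm : max (|b j| - l2) 0 ≤ max (|b j| - l1) 0 :=
      max_le_max (by linarith) le_rfl
    have hmn : (0:ℝ) ≤ max (|b j| - l2) 0 := le_max_right _ _
    have e0 : l1 * γ ≤ l2 * γ := mul_le_mul_of_nonneg_right h12 hγ
    have e1 : max (|b j| - l2) 0 * (1 + l1*γ) ≤ max (|b j| - l2) 0 * (1 + l2*γ) :=
      mul_le_mul_of_nonneg_left (by linarith) hmn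
    have e2 : max (|b j| - l2) 0 * (1 + l2*γ) ≤ max (|b j| - l1) 0 * (1 + l2*γ) :=
      mul_le_mul_of_nonneg_right hm hd2.le
    linarith
  have hstrict : StrictAntiOn φ {lam : ℝ | 0 ≤ lam ∧ u lam ≠ 0} := by
    intro l1 hl1 l2 hl2 h12
    obtain ⟨hl1n, _⟩ := hl1
    obtain ⟨hl2n, hu2⟩ := hl2
    obtain ⟨j0, hj0⟩ := Function.ne_iff.mp hu2
    have ht2pos : 0 < t l2 j0 := by
      have := huabs l2 hl2n j0
      rw [← this]
      exact abs_pos.mpr hj0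
    have hbig : l2 < |b j0| := by
      by_contra hcon
      push_neg at hcon
      have : t l2 j0 = 0 := by
        rw [ht]; simp [max_eq_right (by linarith : |b j0| - l2 ≤ 0)]
      linarith
    have hd1 := hd l1 hl1n
    have hd2 := hd l2 hl2n
    have hstrictj : t l2 j0 < t l1 j0 := by
      rw [ht, div_lt_div_iff₀ hd2 hd1]
      rw [max_eq_left (by linarith : (0:ℝ) ≤ |b j0| - l2),
        max_eq_left (by linarith : (0:ℝ) ≤ |b j0| - l1)]
      have e0 : l1 * γ ≤ l2 * γ := mul_le_mul_of_nonneg_right h12.le hγ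
      have e1 : (|b j0| - l2) * (1 + l1*γ) ≤ (|b j0| - l2) * (1 + l2*γ) :=
        mul_le_mul_of_nonneg_left (by linarith) (by linarith)
      have e2 : (|b j0| - l2) * (1 + l2*γ) < (|b j0| - l1) * (1 + l2*γ) :=
        mul_lt_mul_of_pos_right (by linarith) hd2
      linarith
    have hsum1 : ∑ j, t l2 j < ∑ j, t l1 j :=
      Finset.sum_lt_sum (fun j _ => htanti l1 l2 hl1n h12.le j) ⟨j0, mem_univ j0, hstrictj⟩
    have hsum2 : ∑ j, (t l2 j)^2 ≤ ∑ j, (t l1 j)^2 :=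
      Finset.sum_le_sum fun j _ => by
        have := htanti l1 l2 hl1n h12.le j
        have := htnn l2 hl2n j
        nlinarith
    rw [hφt l1 hl1n, hφt l2 hl2n]
    have : (γ/2) * (∑ j, (t l2 j)^2) ≤ (γ/2) * (∑ j, (t l1 j)^2) :=
      mul_le_mul_of_nonneg_left hsum2 (by linarith)
    linarith
  refine ⟨hstrict, ?_, ?_⟩
  · have hφ0 : φ 0 = (∑ j, |b j|) + (γ/2) * (∑ j, (b j)^2) := by
      rw [hφt 0 le_rfl]
      congr 1
      · exact Finset.sum_congr rfl fun j _ => by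
          rw [ht]; simp [max_eq_left (abs_nonneg (b j))]
      · congr 1
        exact Finset.sum_congr rfl fun j _ => by
          rw [ht]; simp [max_eq_left (abs_nonneg (b j)), sq_abs]
    set B : ℝ := (∑ j, |b j|) + 1 with hB
    have hBnn : 0 ≤ B := by
      have : (0:ℝ) ≤ ∑ j, |b j| := Finset.sum_nonneg fun j _ => abs_nonneg _
      linarith
    have hφB : φ B = 0 := by
      rw [hφt B hBnn]
      have hz : ∀ j : Fin m, t B j = 0 := by
        intro j
        have : |b j| ≤ ∑ i, |b i| :=
          Finset.single_le_sum (fun i _ => abs_nonneg (b i)) (mem_univ j)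
        rw [ht]; simp [max_eq_right (by simp [hB]; linarith : |b j| - B ≤ 0)]
      simp [hz]
    have hcont : ContinuousOn φ (Set.Icc 0 B) := by
      have hg : ContinuousOn (fun lam => (∑ j, t lam j) + (γ/2) * (∑ j, (t lam j)^2))
          (Set.Icc 0 B) := by
        have hco : ∀ j : Fin m, ContinuousOn (fun lam => t lam j) (Set.Icc 0 B) := by
          intro j
          apply ContinuousOn.div
          · exact (continuous_const.sub continuous_id).max continuous_const |>.continuousOn
          · exact (continuous_const.add (continuous_id.mul continuous_const)).continuousOn
          · exact fun lam hlam => (hd lam hlam.1).ne'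
        apply ContinuousOn.add
        · exact continuousOn_finset_sum _ fun j _ => hco j
        · exact ContinuousOn.mul continuousOn_const
            (continuousOn_finset_sum _ fun j _ => (hco j).pow 2)
      exact hg.congr fun x hx => hφt x hx.1
    have hτmem : τ ∈ Set.Icc (φ B) (φ 0) := by
      rw [hφB, hφ0]
      exact ⟨hτ.le, hinfeas.le⟩
    obtain ⟨ls, hlsmem, hφls⟩ := intermediate_value_Icc' hBnn hcont hτmem
    have hlspos : 0 < ls := by
      rcases hlsmem.1.lt_or_eq with h | h
      · exact h
      · exfalso; rw [← h] at hφls; rw [hφ0] at hφls; linarith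
    have hne : ∀ lam : ℝ, 0 < lam → φ lam = τ → u lam ≠ 0 := by
      intro lam hlam hφlam hcon
      have : φ lam = 0 := by
        rw [hφ]
        simp [funext_iff.mp hcon]
      linarith
    refine ⟨ls, ⟨hlspos, hφls⟩, ?_⟩
    intro y ⟨hy, hφy⟩
    rcases lt_trichotomy y ls with h | h | h
    · exfalso
      have := hstrict ⟨hy.le, hne y hy hφy⟩ ⟨hlspos.le, hne ls hlspos hφls⟩ h
      rw [hφy, hφls] at this; linarith
    · exact h
    · exfalso
      have := hstrict ⟨hlspos.le, hne ls hlspos hφls⟩ ⟨hy.le, hne y hy hφy⟩ h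
      rw [hφy, hφls] at this; linarith
  · intro ls hls0 hφls v hv
    have hkey : ∀ j : Fin m,
        (1/2)*(b j - u ls j)^2 + ls*(|u ls j| + γ/2*(u ls j)^2) ≤
        (1/2)*(b j - v j)^2 + ls*(|v j| + γ/2*(v j)^2) :=
      fun j => en_key (b j) ls γ (v j) hγ hls0 _ (hu ls j)
    have hsum := Finset.sum_le_sum fun j (_ : j ∈ univ) => hkey j
    have expand : ∀ w : Fin m → ℝ,
        ∑ j, ((1/2)*(b j - w j)^2 + ls*(|w j| + γ/2*(w j)^2)) =
        (1/2)*(∑ j, (b j - w j)^2) + ls*((∑ j, |w j|) + (γ/2)*(∑ j, (w j)^2)) := by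
      intro w
      simp only [mul_add, Finset.mul_sum, ← Finset.sum_add_distrib]
    rw [expand, expand] at hsum
    have hgv : ls*((∑ j, |v j|) + (γ/2)*(∑ j, (v j)^2)) ≤ ls*τ :=
      mul_le_mul_of_nonneg_left hv hls0.le
    have hgu : (∑ j, |u ls j|) + (γ/2)*(∑ j, (u ls j)^2) = τ := by
      rw [← hφ]; exact hφls
    rw [hgu] at hsum
    linarith
end

section
/- Let D ∈ ℝ^{n×n} be the lower-triangular matrix of ones (D[i,j] = 1 if i ≥ j, else 0), and let Γ = {a₁ < a₂ < … < a_p} ⊆ {1,…,n}. Then D_Γᵀ D_Γ is invertible and its inverse is the symmetric tridiagonal matrix with diagonal entries (c₁, c₁+c₂, …, c_{p−1}+c_p) and off-diagonal entries (−c₁, …, −c_{p−1}), where c_i = 1/(a_{i+1} − a_i) for i < p and c_p = 1/(n + 1 − a_p). -/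
/-!
Put `b k = n - a k` for `k < p` and `b p = 0`. Column `a k` of the cumulative-sum matrix has
`b k` ones, so `G k l = min (b k) (b l)`, while `M = Eᵀ diag(c) E` for the first-difference
matrix `E`. Differencing `j ↦ min (b k) (b j)` at `l` gives `b l - b (l + 1) = 1 / c l` when
`k ≤ l` and `0` otherwise, so `G Eᵀ diag(c)` is the upper triangular matrix of ones, whose
inverse is `E`.
-/

open Finset Matrix

def lowerOnes (n : ℕ) : Matrix (Fin n) (Fin n) ℝ :=
  of fun i j => if j ≤ i then 1 else 0

def upperOnes (p : ℕ) : Matrix (Fin p) (Fin p) ℝ :=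
  of fun i j => if i ≤ j then 1 else 0

def diffMatrix (p : ℕ) : Matrix (Fin p) (Fin p) ℝ :=
  of fun k j => (if (j : ℕ) = k then 1 else 0) - if (j : ℕ) = k + 1 then 1 else 0

def minMatrix (p : ℕ) (b : ℕ → ℝ) : Matrix (Fin p) (Fin p) ℝ :=
  of fun i j => min (b i) (b j)

/-- The value `0` at `k = p` makes the last `1 / c` a gap `b (p - 1) - b p` like the others. -/
def tailLength {n p : ℕ} (a : Fin p → Fin n) (k : ℕ) : ℝ :=
  if h : k < p then n - (a ⟨k, h⟩ : ℕ) else 0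

section

variable {p : ℕ}

theorem sum_diffMatrix_mul {f : ℕ → ℝ} (hf : f p = 0) (k : Fin p) :
    ∑ j, diffMatrix p k j * f j = f k - f (k + 1) := by
  simp only [diffMatrix, of_apply, sub_mul, ite_mul, one_mul, zero_mul, sum_sub_distrib]
  rw [Fin.sum_univ_eq_sum_range (fun j => if j = k then f j else 0),
    Fin.sum_univ_eq_sum_range (fun j => if j = k + 1 then f j else 0), sum_ite_eq',
    sum_ite_eq', if_pos (mem_range.2 k.isLt)]
  split_ifs with h
  · rfl
  · rw [show (k : ℕ) + 1 = p by simp at h; omega, hf]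

theorem sum_mul_diffMatrix (h : ℕ → ℝ) (l : Fin p) :
    ∑ k : Fin p, h k * diffMatrix p k l = h l - if 1 ≤ (l : ℕ) then h (l - 1) else 0 := by
  simp only [diffMatrix, of_apply, mul_sub, mul_ite, mul_one, mul_zero, sum_sub_distrib]
  rw [Fin.sum_univ_eq_sum_range (fun k => if l = k then h k else 0),
    Fin.sum_univ_eq_sum_range (fun k => if l = k + 1 then h k else 0), sum_ite_eq,
    if_pos (mem_range.2 l.isLt)]
  congr 1
  obtain ⟨l, hl⟩ := l
  cases l with
  | zero => simp
  | succ m => simp [show m < p by omega]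

theorem diffMatrix_mul_upperOnes : diffMatrix p * upperOnes p = 1 := by
  ext k j
  rw [mul_apply]
  have := sum_diffMatrix_mul (f := fun m => if m ≤ j then 1 else 0) (by simp [j.isLt]) k
  simp only [upperOnes, of_apply, Fin.le_def] at this ⊢
  rw [this, one_apply]
  split_ifs <;> simp_all [Fin.ext_iff] <;> omega

theorem upperOnes_mul_diffMatrix : upperOnes p * diffMatrix p = 1 :=
  mul_eq_one_comm.mp diffMatrix_mul_upperOnes

theorem diffMatrix_transpose_mul_diagonal_mul_apply (c : ℕ → ℝ) (l l' : Fin p) :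
    ((diffMatrix p)ᵀ * diagonal (fun k : Fin p => c k) * diffMatrix p) l l' =
      if (l : ℕ) = l' then (if 1 ≤ (l : ℕ) then c (l - 1) else 0) + c l
      else if (l : ℕ) + 1 = l' then -c l
      else if (l' : ℕ) + 1 = l then -c l'
      else 0 := by
  let h : ℕ → ℝ := fun k =>
    c k * ((if (l' : ℕ) = k then 1 else 0) - if (l' : ℕ) = k + 1 then 1 else 0)
  have hterm : ∀ k : Fin p, diffMatrix p k l * c k * diffMatrix p k l' = h k * diffMatrix p k l :=
    fun k => by simp only [h, diffMatrix, of_apply]; ring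
  rw [mul_apply]
  simp only [mul_diagonal, transpose_apply, hterm]
  rw [sum_mul_diffMatrix]
  simp only [h]
  split_ifs <;> first | omega | ring1 | (rw [show (l : ℕ) - 1 = l' by omega]; ring)

theorem minMatrix_mul_diffMatrix_transpose_mul_diagonal {b : ℕ → ℝ}
    (hb : StrictAntiOn b (Set.Iic p)) (hbp : b p = 0) :
    minMatrix p b * (diffMatrix p)ᵀ * diagonal (fun k : Fin p => (b k - b (k + 1))⁻¹) =
      upperOnes p := by
  ext l k
  have hl : (l : ℕ) ∈ Set.Iic p := Set.mem_Iic.2 l.isLt.le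
  have hk : (k : ℕ) ∈ Set.Iic p := Set.mem_Iic.2 k.isLt.le
  have hk' : (k : ℕ) + 1 ∈ Set.Iic p := Set.mem_Iic.2 k.isLt
  have hmin : min (b l) (b k) - min (b l) (b (k + 1)) =
      if l ≤ k then b k - b (k + 1) else 0 := by
    split_ifs with hlk
    · rw [min_eq_right (hb.antitoneOn hl hk hlk),
        min_eq_right (hb.antitoneOn hl hk' (by omega))]
    · rw [min_eq_left (hb.antitoneOn hk hl (by omega)),
        min_eq_left (hb.antitoneOn hk' hl (by omega)), sub_self]
  have hgap : b k - b (k + 1) ≠ 0 := (sub_pos.2 (hb hk hk' (by omega))).ne'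
  have hbl : min (b l) (b p) = 0 := by
    rw [hbp, min_eq_right (hbp ▸ hb.antitoneOn hl Set.self_mem_Iic l.isLt.le)]
  rw [mul_diagonal, mul_apply]
  simp only [transpose_apply, minMatrix, of_apply, mul_comm (min _ _)]
  rw [sum_diffMatrix_mul (f := fun j => min (b l) (b j)) hbl, hmin]
  simp only [upperOnes, of_apply]
  split_ifs
  · exact mul_inv_cancel₀ hgap
  · exact zero_mul _

theorem minMatrix_mul_eq_one {b : ℕ → ℝ} (hb : StrictAntiOn b (Set.Iic p)) (hbp : b p = 0) :
    minMatrix p b *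
      ((diffMatrix p)ᵀ * diagonal (fun k : Fin p => (b k - b (k + 1))⁻¹) * diffMatrix p) = 1 := by
  rw [← mul_assoc, ← mul_assoc, minMatrix_mul_diffMatrix_transpose_mul_diagonal hb hbp,
    upperOnes_mul_diffMatrix]

end

theorem lowerOnes_transpose_mul_self_apply {n : ℕ} (i j : Fin n) :
    ((lowerOnes n)ᵀ * lowerOnes n) i j = n - ((max i j : Fin n) : ℕ) := by
  rw [mul_apply]
  simp only [transpose_apply, lowerOnes, of_apply, mul_ite, mul_one, mul_zero, ← ite_and,
    ← max_le_iff, sum_boole]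
  rw [filter_le_eq_Ici, Fin.card_Ici, max_comm, Nat.cast_sub (max i j).isLt.le]

section

variable {n p : ℕ} (a : Fin p → Fin n)

theorem tailLength_apply (l : Fin p) : tailLength a l = n - (a l : ℕ) :=
  dif_pos l.isLt

theorem tailLength_self : tailLength a p = 0 :=
  dif_neg (lt_irrefl p)

theorem tailLength_strictAntiOn {a : Fin p → Fin n} (ha : StrictMono a) :
    StrictAntiOn (tailLength a) (Set.Iic p) := by
  intro k _ k' hk' hkk'
  have hkp : k < p := hkk'.trans_le hk'
  simp only [tailLength, dif_pos hkp]
  split_ifs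
  · exact sub_lt_sub_left (by exact_mod_cast ha (Fin.mk_lt_mk.2 hkk')) _
  · exact sub_pos.2 (by exact_mod_cast (a _).isLt)

theorem gram_lowerOnes_submatrix :
    ((lowerOnes n).submatrix id a)ᵀ * (lowerOnes n).submatrix id a =
      minMatrix p (tailLength a) := by
  rw [transpose_submatrix, ← submatrix_mul _ _ _ _ _ Function.bijective_id]
  ext l l'
  rw [submatrix_apply, lowerOnes_transpose_mul_self_apply, minMatrix, of_apply, tailLength_apply,
    tailLength_apply, Fin.coe_max, Nat.cast_max, sub_sup]

end

/-- Indices are 0-based: the paper's `c_p = 1/(n + 1 - a_p)` reads `c (p-1) = 1/(n - a (p-1))`. -/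
theorem gram_of_cumsum_matrix_inverse_general (n p : ℕ)
    (D : Matrix (Fin n) (Fin n) ℝ)
    (hD : ∀ i j, D i j = if (j : ℕ) ≤ (i : ℕ) then 1 else 0)
    (a : Fin p → Fin n) (ha : StrictMono a)
    (DΓ : Matrix (Fin n) (Fin p) ℝ) (hDΓ : ∀ i l, DΓ i l = D i (a l))
    (G : Matrix (Fin p) (Fin p) ℝ) (hG : G = DΓᵀ * DΓ)
    (c : Fin p → ℝ)
    (hc : ∀ i : Fin p, c i =
        if h : (i : ℕ) + 1 < p then 1 / (((a ⟨(i : ℕ) + 1, h⟩ : ℕ) : ℝ) - ((a i : ℕ) : ℝ))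
        else 1 / ((n : ℝ) - ((a i : ℕ) : ℝ)))
    (M : Matrix (Fin p) (Fin p) ℝ)
    (hM : ∀ l l' : Fin p, M l l' =
        if (l : ℕ) = (l' : ℕ) then
          (if h : 1 ≤ (l : ℕ) then
              c ⟨(l : ℕ) - 1, Nat.lt_of_le_of_lt (Nat.sub_le _ _) l.isLt⟩
            else 0) + c l
        else if (l : ℕ) + 1 = (l' : ℕ) then -(c l)
        else if (l' : ℕ) + 1 = (l : ℕ) then -(c l')
        else 0) :
    G * M = 1 ∧ M * G = 1 := by
  set b := tailLength a
  have hDΓ' : DΓ = (lowerOnes n).submatrix id a := ext fun i l => by rw [hDΓ, hD]; rfl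
  have hc' : ∀ i : Fin p, c i = (b i - b (i + 1))⁻¹ := fun i => by
    rw [hc i, one_div]
    simp only [b, tailLength, dif_pos i.isLt]
    split_ifs <;> ring
  have hM' : M = (diffMatrix p)ᵀ * diagonal (fun k : Fin p => (b k - b (k + 1))⁻¹) *
      diffMatrix p := by
    ext l l'
    rw [hM, diffMatrix_transpose_mul_diagonal_mul_apply (fun k => (b k - b (k + 1))⁻¹)]
    simp only [hc', dite_eq_ite]
  have hGM : G * M = 1 := by
    rw [hG, hDΓ', gram_lowerOnes_submatrix, hM']
    exact minMatrix_mul_eq_one (tailLength_strictAntiOn ha) (tailLength_self a)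
  exact ⟨hGM, mul_eq_one_comm.mp hGM⟩

/-- Closed-form tridiagonal inverse of the Gram matrix `D_Γᵀ D_Γ`, where `D` is the
lower-triangular matrix of ones and `Γ = {a₀ < a₁ < … < a_{p−1}}` indexes columns
(0-indexed; the paper's `c_i = 1/(a_{i+1} − a_i)` and `c_p = 1/(n + 1 − a_p)` in
1-indexed notation). -/
theorem gram_of_cumsum_matrix_inverse (n p : ℕ) (hp : 0 < p)
    (D : Matrix (Fin n) (Fin n) ℝ)
    (hD : ∀ i j, D i j = if (j : ℕ) ≤ (i : ℕ) then 1 else 0)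
    (a : Fin p → Fin n) (ha : StrictMono a)
    (DΓ : Matrix (Fin n) (Fin p) ℝ) (hDΓ : ∀ i l, DΓ i l = D i (a l))
    (G : Matrix (Fin p) (Fin p) ℝ) (hG : G = DΓᵀ * DΓ)
    (c : Fin p → ℝ)
    (hc : ∀ i : Fin p, c i =
        if h : (i : ℕ) + 1 < p then 1 / (((a ⟨(i : ℕ) + 1, h⟩ : ℕ) : ℝ) - ((a i : ℕ) : ℝ))
        else 1 / ((n : ℝ) - ((a i : ℕ) : ℝ)))
    (M : Matrix (Fin p) (Fin p) ℝ)
    (hM : ∀ l l' : Fin p, M l l' =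
        if (l : ℕ) = (l' : ℕ) then
          (if h : 1 ≤ (l : ℕ) then
              c ⟨(l : ℕ) - 1, Nat.lt_of_le_of_lt (Nat.sub_le _ _) l.isLt⟩
            else 0) + c l
        else if (l : ℕ) + 1 = (l' : ℕ) then -(c l)
        else if (l' : ℕ) + 1 = (l : ℕ) then -(c l')
        else 0) :
    G * M = 1 ∧ M * G = 1 :=
  gram_of_cumsum_matrix_inverse_general n p D hD a ha DΓ hDΓ G hG c hc M hM
end
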